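/- arXiv:2601.11225 — 13 statements merged into one kernel-verified Lean document; each statement's English description precedes it below -/
import Mathlib

section
/- Let H be a complex Hilbert space, let (e_j)_{j∈J} (J countable) be a Parseval frame in H consisting of nonzero vectors, and let (E_j)_{j∈J} be pairwise distinct real numbers. Then the following are equivalent: (i) for all Borel sets Δ₁, Δ₂ ⊆ ℝ, the bounded operators F_{E,e}(Δ₁) and F_{E,e}(Δ₂) commute; (ii) there exist an orthonormal basis (γ_i)_{i∈I} of H, a surjection p : J → I, and nonzero complex scalars (c_j)_{j∈J} such that e_j = c_j · γ_{p(j)} for every j ∈ J and ∑_{j ∈ p⁻¹(i)} |c_j|² = 1 for every i ∈ I. -/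
open scoped InnerProductSpace

private lemma aux_bound {H : Type*} [NormedAddCommGroup H] [InnerProductSpace ℂ H]
    {J : Type*} {I : Type*} (b : HilbertBasis I ℂ H) (p : J → I) (c : J → ℂ)
    (hsum1 : ∀ i : I, HasSum (fun j : {j : J // p j = i} => ‖c j.1‖ ^ 2) 1)
    (e : J → H) (hec : ∀ j, e j = c j • b (p j)) (f : H) (s : Set J) (t : Finset s) :
    ‖∑ j ∈ t, ⟪e j.1, f⟫_ℂ • e j.1‖ ^ 2 ≤ ∑ j ∈ t, ‖⟪e j.1, f⟫_ℂ‖ ^ 2 := by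
  classical
  set q : s → I := fun j => p j.1 with hq
  set d : s → ℂ := fun j => ⟪e j.1, f⟫_ℂ * c j.1 with hd
  set u : Finset I := t.image q with hu
  set C : I → ℂ := fun i => ∑ j ∈ t.filter (fun j => q j = i), d j with hC
  set M : I → ℝ := fun i => ∑ j ∈ t.filter (fun j => q j = i), ‖c j.1‖ ^ 2 with hM
  have hterm : ∀ j : s, ⟪e j.1, f⟫_ℂ • e j.1 = d j • b (q j) := by
    intro j
    rw [hd, hq]
    simp only []
    rw [hec j.1, smul_smul]
  have hinner : ∀ j : s, ⟪e j.1, f⟫_ℂ = (starRingEnd ℂ) (c j.1) * ⟪b (q j), f⟫_ℂ := by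
    intro j
    rw [hec j.1, inner_smul_left]
  -- regroup
  have hre : ∑ j ∈ t, ⟪e j.1, f⟫_ℂ • e j.1 = ∑ i ∈ u, C i • b i := by
    calc ∑ j ∈ t, ⟪e j.1, f⟫_ℂ • e j.1 = ∑ j ∈ t, d j • b (q j) := by
          exact Finset.sum_congr rfl fun j _ => hterm j
      _ = ∑ i ∈ u, ∑ j ∈ t.filter (fun j => q j = i), d j • b (q j) :=
          (Finset.sum_fiberwise_of_maps_to (fun x hx => Finset.mem_image_of_mem q hx) _).symm
      _ = ∑ i ∈ u, C i • b i := by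
          refine Finset.sum_congr rfl fun i _ => ?_
          rw [hC, Finset.sum_smul]
          refine Finset.sum_congr rfl fun j hj => ?_
          rw [(Finset.mem_filter.mp hj).2]
  -- norm of orthogonal sum
  have hnorm : ‖∑ i ∈ u, C i • b i‖ ^ 2 = ∑ i ∈ u, ‖C i‖ ^ 2 := by
    have h2 : (⟪∑ i ∈ u, C i • b i, ∑ i ∈ u, C i • b i⟫_ℂ)
        = ((∑ i ∈ u, ‖C i‖ ^ 2 : ℝ) : ℂ) := by
      rw [b.orthonormal.inner_sum]
      push_cast
      exact Finset.sum_congr rfl fun i _ => RCLike.conj_mul (C i)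
    have h3 := norm_sq_eq_re_inner (𝕜 := ℂ) (∑ i ∈ u, C i • b i)
    rw [h2] at h3
    simp only [RCLike.ofReal_re, RCLike.re_to_complex, Complex.ofReal_re] at h3
    exact h3
  -- per-fiber computations
  have hCi : ∀ i, C i = ((M i : ℝ) : ℂ) * ⟪b i, f⟫_ℂ := by
    intro i
    rw [hC, hM]
    push_cast
    rw [Finset.sum_mul]
    refine Finset.sum_congr rfl fun j hj => ?_
    have hji : q j = i := (Finset.mem_filter.mp hj).2
    rw [hd]
    simp only []
    rw [hinner j, hji]
    have : ((‖c j.1‖ : ℂ)) ^ 2 = (starRingEnd ℂ) (c j.1) * c j.1 := (RCLike.conj_mul (c j.1)).symm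
    rw [this]
    ring
  have hMnonneg : ∀ i, 0 ≤ M i := by
    intro i
    exact Finset.sum_nonneg fun j _ => by positivity
  have hM1 : ∀ i, M i ≤ 1 := by
    intro i
    set u' : Finset {j : J // p j = i} :=
      (t.filter (fun j => q j = i)).attach.map
        ⟨fun x => ⟨x.1.1, by
            have h := x.2
            rw [Finset.mem_filter] at h
            exact h.2⟩, by
          intro a b h
          simp only [Subtype.mk.injEq] at h
          exact Subtype.ext (Subtype.ext h)⟩ with hu'
    have heq : M i = ∑ x ∈ u', ‖c x.1‖ ^ 2 := by
      rw [hu', Finset.sum_map, hM]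
      simp only [Function.Embedding.coeFn_mk]
      exact (Finset.sum_attach _ _).symm
    rw [heq]
    exact sum_le_hasSum u' (fun x _ => by positivity) (hsum1 i)
  have hfib : ∀ i, ∀ j ∈ t.filter (fun j => q j = i), ‖⟪e j.1, f⟫_ℂ‖ ^ 2 = ‖c j.1‖ ^ 2 * ‖⟪b i, f⟫_ℂ‖ ^ 2 := by
    intro i j hj
    have hji : q j = i := (Finset.mem_filter.mp hj).2
    rw [hinner j, hji, norm_mul, mul_pow, RCLike.norm_conj]
  have hper : ∀ i, ‖C i‖ ^ 2 ≤ ∑ j ∈ t.filter (fun j => q j = i), ‖⟪e j.1, f⟫_ℂ‖ ^ 2 := by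
    intro i
    have h5 : ∑ j ∈ t.filter (fun j => q j = i), ‖⟪e j.1, f⟫_ℂ‖ ^ 2
        = M i * ‖⟪b i, f⟫_ℂ‖ ^ 2 := by
      rw [hM, Finset.sum_mul]
      exact Finset.sum_congr rfl (hfib i)
    rw [h5, hCi i, norm_mul, mul_pow]
    have h6 : ‖((M i : ℝ) : ℂ)‖ = M i := by
      rw [Complex.norm_real, Real.norm_eq_abs, abs_of_nonneg (hMnonneg i)]
    rw [h6]
    have : M i ^ 2 ≤ M i := by nlinarith [hMnonneg i, hM1 i]
    exact mul_le_mul_of_nonneg_right this (by positivity)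
  calc ‖∑ j ∈ t, ⟪e j.1, f⟫_ℂ • e j.1‖ ^ 2 = ∑ i ∈ u, ‖C i‖ ^ 2 := by rw [hre, hnorm]
    _ ≤ ∑ i ∈ u, ∑ j ∈ t.filter (fun j => q j = i), ‖⟪e j.1, f⟫_ℂ‖ ^ 2 :=
        Finset.sum_le_sum fun i _ => hper i
    _ = ∑ j ∈ t, ‖⟪e j.1, f⟫_ℂ‖ ^ 2 :=
        Finset.sum_fiberwise_of_maps_to (fun x hx => Finset.mem_image_of_mem q hx) _

private lemma aux_summable {H : Type*} [NormedAddCommGroup H] [InnerProductSpace ℂ H]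
    [CompleteSpace H]
    {J : Type*} {I : Type*} (b : HilbertBasis I ℂ H) (p : J → I) (c : J → ℂ)
    (hsum1 : ∀ i : I, HasSum (fun j : {j : J // p j = i} => ‖c j.1‖ ^ 2) 1)
    (e : J → H) (hec : ∀ j, e j = c j • b (p j)) (f : H)
    (hg : Summable fun j : J => ‖⟪e j, f⟫_ℂ‖ ^ 2) (s : Set J) :
    Summable (fun j : s => ⟪e j.1, f⟫_ℂ • e j.1) := by
  rw [summable_iff_vanishing_norm]
  intro ε hε
  have hg' : Summable (fun j : s => ‖⟪e j.1, f⟫_ℂ‖ ^ 2) := hg.subtype s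
  obtain ⟨t₀, ht₀⟩ := summable_iff_vanishing_norm.mp hg' (ε ^ 2) (by positivity)
  refine ⟨t₀, fun t ht => ?_⟩
  have h1 := aux_bound b p c hsum1 e hec f s t
  have h2 := ht₀ t ht
  have h3 : ∑ j ∈ t, ‖⟪e j.1, f⟫_ℂ‖ ^ 2 < ε ^ 2 :=
    lt_of_le_of_lt (le_abs_self _) (by simpa [Real.norm_eq_abs] using h2)
  exact lt_of_pow_lt_pow_left₀ 2 hε.le (lt_of_le_of_lt h1 h3)

private lemma aux_coef {H : Type*} [NormedAddCommGroup H] [InnerProductSpace ℂ H]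
    [CompleteSpace H]
    {J : Type*} {I : Type*} [DecidableEq I] (b : HilbertBasis I ℂ H) (p : J → I) (c : J → ℂ)
    (e : J → H) (hec : ∀ j, e j = c j • b (p j)) (g : H) (s : Set J)
    (hS : Summable (fun j : s => ⟪e j.1, g⟫_ℂ • e j.1)) (i : I) :
    ⟪b i, ∑' j : s, ⟪e j.1, g⟫_ℂ • e j.1⟫_ℂ
      = (∑' j : s, (if p j.1 = i then ((‖c j.1‖ : ℂ)) ^ 2 else 0)) * ⟪b i, g⟫_ℂ := by
  have hmap : ⟪b i, ∑' j : s, ⟪e j.1, g⟫_ℂ • e j.1⟫_ℂ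
      = ∑' j : s, ⟪b i, ⟪e j.1, g⟫_ℂ • e j.1⟫_ℂ := by
    simpa only [innerSL_apply_apply] using (innerSL ℂ (b i)).map_tsum hS
  rw [hmap, ← tsum_mul_right]
  refine tsum_congr fun j => ?_
  rw [inner_smul_right, hec j.1]
  rw [inner_smul_left (𝕜 := ℂ)]
  rw [inner_smul_right (𝕜 := ℂ)]
  by_cases h : p j.1 = i
  · rw [h, if_pos rfl]
    have h1 : ⟪b i, b i⟫_ℂ = 1 := by
      have := orthonormal_iff_ite.mp b.orthonormal i i
      simpa using this
    rw [h1]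
    have h2 : ((‖c j.1‖ : ℂ)) ^ 2 = (starRingEnd ℂ) (c j.1) * c j.1 := (RCLike.conj_mul (c j.1)).symm
    rw [h2]
    ring
  · rw [if_neg h]
    have h1 : ⟪b i, b (p j.1)⟫_ℂ = 0 := by
      have := orthonormal_iff_ite.mp b.orthonormal i (p j.1)
      simpa [Ne.symm h] using this
    rw [h1]
    ring


/-- For a Parseval frame `e` of nonzero vectors indexed by a countable set `J`
and pairwise distinct reals `E`, the POVM `F_{E,e}` (given by
`F Δ f = ∑_{j : E j ∈ Δ} ⟨f, e j⟩ e j`) is commutative iff the frame arises from an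
orthonormal basis `γ` via `e j = c j • γ (p j)` with `p` surjective, `c j ≠ 0`
and `∑_{j ∈ p⁻¹ i} |c j|² = 1`. -/
theorem stmt_0 {H : Type*} [NormedAddCommGroup H] [InnerProductSpace ℂ H] [CompleteSpace H]
    {J : Type*} [Countable J] (e : J → H) (he : ∀ j, e j ≠ 0)
    (hPF : ∀ f : H, HasSum (fun j => ‖⟪e j, f⟫_ℂ‖ ^ 2) (‖f‖ ^ 2))
    (E : J → ℝ) (hE : Function.Injective E)
    (F : Set ℝ → H → H)
    (hF : ∀ (Δ : Set ℝ) (f : H), F Δ f = ∑' j : {j : J // E j ∈ Δ}, ⟪e j.1, f⟫_ℂ • e j.1) :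
    (∀ Δ₁ Δ₂ : Set ℝ, MeasurableSet Δ₁ → MeasurableSet Δ₂ →
        ∀ f : H, F Δ₁ (F Δ₂ f) = F Δ₂ (F Δ₁ f)) ↔
      (∃ (I : Type) (b : HilbertBasis I ℂ H) (p : J → I) (c : J → ℂ),
        Function.Surjective p ∧ (∀ j, c j ≠ 0) ∧ (∀ j, e j = c j • b (p j)) ∧
        ∀ i : I, HasSum (fun j : {j : J // p j = i} => ‖c j.1‖ ^ 2) 1) := by
  classical
  constructor
  · intro hcomm
    -- singleton evaluation
    have hFs : ∀ (j : J) (f : H), F {E j} f = ⟪e j, f⟫_ℂ • e j := by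
      intro j f
      rw [hF]
      have huniq : ∀ x : {j' : J // E j' ∈ ({E j} : Set ℝ)}, x = ⟨j, rfl⟩ := by
        rintro ⟨j', hj'⟩
        exact Subtype.ext (hE hj')
      exact tsum_eq_single (⟨j, rfl⟩ : {j' : J // E j' ∈ ({E j} : Set ℝ)})
        (fun b' hb' => absurd (huniq b') hb')
    -- dichotomy: orthogonal or parallel
    have dich : ∀ j k : J, ⟪e j, e k⟫_ℂ = 0 ∨ ∃ t : ℂ, e k = t • e j := by
      intro j k
      by_cases h : ⟪e j, e k⟫_ℂ = 0
      · exact Or.inl h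
      right
      have h1 := hcomm {E j} {E k} (measurableSet_singleton _) (measurableSet_singleton _) (e j)
      simp only [hFs] at h1
      rw [inner_smul_right, inner_smul_right] at h1
      have hD : (⟪e j, e j⟫_ℂ * ⟪e k, e j⟫_ℂ) ≠ 0 :=
        mul_ne_zero (inner_self_ne_zero.mpr (he j))
          (fun hz => h (inner_eq_zero_symm.mp hz))
      refine ⟨(⟪e j, e j⟫_ℂ * ⟪e k, e j⟫_ℂ)⁻¹ * (⟪e k, e j⟫_ℂ * ⟪e j, e k⟫_ℂ), ?_⟩
      rw [mul_smul, h1, smul_smul, inv_mul_cancel₀ hD, one_smul]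
    -- setoid of parallel vectors
    letI S : Setoid J := ⟨fun j k => ∃ t : ℂ, e k = t • e j,
      ⟨fun j => ⟨1, (one_smul ℂ (e j)).symm⟩,
       by
        rintro j k ⟨t, ht⟩
        have htne : t ≠ 0 := by
          rintro rfl
          rw [zero_smul] at ht
          exact he k ht
        exact ⟨t⁻¹, by rw [ht, smul_smul, inv_mul_cancel₀ htne, one_smul]⟩,
       by
        rintro j k l ⟨t, ht⟩ ⟨u, hu⟩
        exact ⟨u * t, by rw [hu, ht, smul_smul]⟩⟩⟩
    let I0 := Quotient S
    let p0 : J → I0 := fun j => ⟦j⟧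
    have hout : ∀ j : J, ∃ t : ℂ, e j = t • e (Quotient.out (p0 j)) := fun j =>
      Quotient.mk_out j
    let γ0 : I0 → H := fun i => ((‖e (Quotient.out i)‖ : ℝ) : ℂ)⁻¹ • e (Quotient.out i)
    let c0 : J → ℂ := fun j => Classical.choose (hout j) * ((‖e (Quotient.out (p0 j))‖ : ℝ) : ℂ)
    have hγnorm : ∀ i, ‖γ0 i‖ = 1 := by
      intro i
      have hne : ‖e (Quotient.out i)‖ ≠ 0 := norm_ne_zero_iff.mpr (he _)
      show ‖((‖e (Quotient.out i)‖ : ℝ) : ℂ)⁻¹ • e (Quotient.out i)‖ = 1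
      rw [norm_smul, norm_inv, Complex.norm_real, Real.norm_eq_abs,
        abs_of_nonneg (norm_nonneg _), inv_mul_cancel₀ hne]
    have he0 : ∀ j, e j = c0 j • γ0 (p0 j) := by
      intro j
      have hch := Classical.choose_spec (hout j)
      have hne : ((‖e (Quotient.out (p0 j))‖ : ℝ) : ℂ) ≠ 0 := by
        simpa using norm_ne_zero_iff.mpr (he (Quotient.out (p0 j)))
      calc e j = Classical.choose (hout j) • e (Quotient.out (p0 j)) := hch
        _ = c0 j • γ0 (p0 j) := by
            show _ = (Classical.choose (hout j) * _) • (((‖e (Quotient.out (p0 j))‖ : ℝ) : ℂ)⁻¹ • _)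
            rw [smul_smul, mul_assoc, mul_inv_cancel₀ hne, mul_one]
    have hc0 : ∀ j, c0 j ≠ 0 := by
      intro j hzero
      apply he j
      rw [he0 j, hzero, zero_smul]
    have hoij : ∀ i₁ i₂ : I0, i₁ ≠ i₂ → ⟪e (Quotient.out i₁), e (Quotient.out i₂)⟫_ℂ = 0 := by
      intro i₁ i₂ hne
      rcases dich (Quotient.out i₁) (Quotient.out i₂) with h | ⟨t, ht⟩
      · exact h
      · exfalso
        apply hne
        have h2 : (⟦Quotient.out i₁⟧ : I0) = ⟦Quotient.out i₂⟧ := Quotient.sound ⟨t, ht⟩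
        rwa [Quotient.out_eq, Quotient.out_eq] at h2
    have honγ : Orthonormal ℂ γ0 := by
      rw [orthonormal_iff_ite]
      intro i₁ i₂
      by_cases h : i₁ = i₂
      · subst h
        rw [if_pos rfl, @inner_self_eq_norm_sq_to_K ℂ, hγnorm i₁]
        norm_num
      · rw [if_neg h]
        show ⟪((‖e (Quotient.out i₁)‖ : ℝ) : ℂ)⁻¹ • e (Quotient.out i₁),
          ((‖e (Quotient.out i₂)‖ : ℝ) : ℂ)⁻¹ • e (Quotient.out i₂)⟫_ℂ = 0
        rw [inner_smul_left, inner_smul_right, hoij i₁ i₂ h, mul_zero, mul_zero]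
    have horth : ∀ (j : J) (i : I0), p0 j ≠ i → ⟪e j, γ0 i⟫_ℂ = 0 := by
      intro j i hne
      rw [he0 j, inner_smul_left]
      have h2 := orthonormal_iff_ite.mp honγ (p0 j) i
      rw [if_neg hne] at h2
      rw [h2, mul_zero]
    have hinnerc : ∀ j : J, ⟪e j, γ0 (p0 j)⟫_ℂ = (starRingEnd ℂ) (c0 j) := by
      intro j
      rw [he0 j, inner_smul_left]
      have h2 := orthonormal_iff_ite.mp honγ (p0 j) (p0 j)
      rw [if_pos rfl] at h2
      rw [h2, mul_one]
    have hsumγ : ∀ i : I0, HasSum (fun j : {j : J // p0 j = i} => ‖c0 j.1‖ ^ 2) 1 := by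
      intro i
      have h1 := hPF (γ0 i)
      rw [hγnorm i, one_pow] at h1
      have hsupp : Function.support (fun j : J => ‖⟪e j, γ0 i⟫_ℂ‖ ^ 2) ⊆ {j : J | p0 j = i} := by
        intro j hj
        by_contra hm
        apply hj
        show ‖⟪e j, γ0 i⟫_ℂ‖ ^ 2 = 0
        rw [horth j i hm]
        simp
      have h2 := (hasSum_subtype_iff_of_support_subset hsupp).mpr h1
      have hfun : (fun j : {j : J // p0 j = i} => ‖c0 j.1‖ ^ 2)
          = ((fun j : J => ‖⟪e j, γ0 i⟫_ℂ‖ ^ 2) ∘ (Subtype.val : {j : J // p0 j = i} → J)) := by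
        funext j
        show ‖c0 j.1‖ ^ 2 = ‖⟪e j.1, γ0 i⟫_ℂ‖ ^ 2
        have h5 := hinnerc j.1
        rw [j.2] at h5
        rw [h5, RCLike.norm_conj]
      rw [hfun]
      exact h2
    have hspan : (Submodule.span ℂ (Set.range γ0))ᗮ = ⊥ := by
      rw [Submodule.eq_bot_iff]
      intro f hf
      have hfe : ∀ j, ⟪e j, f⟫_ℂ = 0 := by
        intro j
        rw [he0 j, inner_smul_left]
        have h3 : ⟪γ0 (p0 j), f⟫_ℂ = 0 :=
          (Submodule.mem_orthogonal _ f).mp hf _ (Submodule.subset_span ⟨p0 j, rfl⟩)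
        rw [h3, mul_zero]
      have h2 : HasSum (fun j : J => ‖⟪e j, f⟫_ℂ‖ ^ 2) 0 := by
        convert hasSum_zero with j
        rw [hfe j]
        simp
      have h4 : ‖f‖ ^ 2 = 0 := (hPF f).unique h2
      have h5 : ‖f‖ = 0 := by
        nlinarith [norm_nonneg f]
      exact norm_eq_zero.mp h5
    -- transfer to a Type 0 index
    have hp0surj : Function.Surjective p0 := fun i => ⟨Quotient.out i, Quotient.out_eq i⟩
    haveI : Countable I0 := hp0surj.countable
    obtain ⟨φ, hφ⟩ := Countable.exists_injective_nat I0
    let eqv : I0 ≃ Set.range φ := Equiv.ofInjective φ hφ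
    let γ1 : ↥(Set.range φ) → H := γ0 ∘ eqv.symm
    have hon1 : Orthonormal ℂ γ1 := honγ.comp eqv.symm eqv.symm.injective
    have hrange : Set.range γ1 = Set.range γ0 := eqv.symm.surjective.range_comp γ0
    have hspan1 : (Submodule.span ℂ (Set.range γ1))ᗮ = ⊥ := by rw [hrange]; exact hspan
    let b : HilbertBasis ↥(Set.range φ) ℂ H := HilbertBasis.mkOfOrthogonalEqBot hon1 hspan1
    have hb : ⇑b = γ1 := HilbertBasis.coe_mkOfOrthogonalEqBot hon1 hspan1
    refine ⟨↥(Set.range φ), b, fun j => eqv (p0 j), c0, ?_, hc0, ?_, ?_⟩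
    · intro i
      obtain ⟨j, hj⟩ := hp0surj (eqv.symm i)
      exact ⟨j, by show eqv (p0 j) = i; rw [hj, Equiv.apply_symm_apply]⟩
    · intro j
      rw [hb]
      show e j = c0 j • γ0 (eqv.symm (eqv (p0 j)))
      rw [Equiv.symm_apply_apply]
      exact he0 j
    · intro i
      have h1 := hsumγ (eqv.symm i)
      let eqv2 : {j : J // p0 j = eqv.symm i} ≃ {j : J // eqv (p0 j) = i} :=
        Equiv.subtypeEquivRight (fun j => Equiv.eq_symm_apply eqv)
      exact (Equiv.hasSum_iff eqv2).mp h1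

  · rintro ⟨I, b, p, c, hsurj, hc0, hec, hsum1⟩ Δ₁ Δ₂ _ _ f
    have hsum : ∀ (g : H) (Δ : Set ℝ),
        Summable (fun j : {j : J // E j ∈ Δ} => ⟪e j.1, g⟫_ℂ • e j.1) := fun g Δ =>
      aux_summable b p c hsum1 e hec g ((hPF g).summable) {j | E j ∈ Δ}
    have hcoef : ∀ (Δ : Set ℝ) (g : H) (i : I), ⟪b i, F Δ g⟫_ℂ
        = (∑' j : {j : J // E j ∈ Δ}, (if p j.1 = i then ((‖c j.1‖ : ℂ)) ^ 2 else 0))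
          * ⟪b i, g⟫_ℂ := by
      intro Δ g i
      rw [hF]
      exact aux_coef b p c e hec g {j | E j ∈ Δ} (hsum g Δ) i
    have key : ∀ i, b.repr (F Δ₁ (F Δ₂ f)) i = b.repr (F Δ₂ (F Δ₁ f)) i := by
      intro i
      rw [b.repr_apply_apply, b.repr_apply_apply, hcoef, hcoef, hcoef, hcoef]
      ring
    exact b.repr.injective (lp.ext (funext key))
end

section
/- Let H be a complex Hilbert space, (γ_i)_{i∈I} an orthonormal basis of H, p : J → I a surjection (J countable), and (c_j)_{j∈J} nonzero complex scalars with ∑_{j∈p⁻¹(i)} |c_j|² = 1 for every i ∈ I, so that e_j = c_j γ_{p(j)} defines a Parseval frame. Let (E_j)_{j∈J} be pairwise distinct real numbers. Define μ(Δ, i) = ∑_{j ∈ p⁻¹(i), E_j ∈ Δ} |c_j|² for Borel Δ ⊆ ℝ and i ∈ I. Then (a) for every i ∈ I, the map Δ ↦ μ(Δ, i) is a probability measure on the Borel sets of ℝ (in particular μ(ℝ, i) = 1 and it is countably additive); and (b) for every Borel set Δ ⊆ ℝ and every f ∈ H, F_{E,e}(Δ)f = ∑_{i∈I} μ(Δ,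 i) ⟨f, γ_i⟩ γ_i. -/
open scoped InnerProductSpace

private lemma key_summable {H I J : Type*} [NormedAddCommGroup H] [InnerProductSpace ℂ H]
    [CompleteSpace H] (b : HilbertBasis I ℂ H) (p : J → I) (r : J → ℝ)
    (hr0 : ∀ j, 0 ≤ r j)
    (hfs : ∀ i : I, Summable ({j : J | p j = i}.indicator r))
    (hf1 : ∀ i : I, ∑' j, ({j : J | p j = i}.indicator r) j ≤ 1)
    (a : I → ℂ) (hsq : Summable fun i => ‖a i‖ ^ 2) :
    Summable fun j : J => r j • (a (p j) • b (p j)) := by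
  classical
  rw [summable_iff_vanishing]
  intro u hu
  obtain ⟨ε, hε, hball⟩ := Metric.mem_nhds_iff.1 hu
  set C := ∑' i, ‖a i‖ ^ 2 with hCdef
  have hC0 : 0 ≤ C := tsum_nonneg fun i => by positivity
  set δ : ℝ := min 1 (ε ^ 2 / (2 * (C + 1))) with hδdef
  have hδpos : 0 < δ := lt_min one_pos (by positivity)
  have hδ1 : δ ≤ 1 := min_le_left _ _
  have hδ2 : δ ≤ ε ^ 2 / (2 * (C + 1)) := min_le_right _ _
  obtain ⟨I₀, hI₀⟩ := hsq.vanishing (Iio_mem_nhds (show (0:ℝ) < ε ^ 2 / 2 by positivity))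
  have hKex : ∀ i : I, ∃ K : Finset J, ∀ t : Finset J, Disjoint t K →
      (∑ j ∈ t, ({j : J | p j = i}.indicator r) j) < δ := by
    intro i
    obtain ⟨K, hK⟩ := (hfs i).vanishing (Iio_mem_nhds hδpos)
    exact ⟨K, fun t ht => hK t ht⟩
  choose K hK using hKex
  refine ⟨I₀.biUnion K, fun t ht => hball ?_⟩
  rw [Metric.mem_ball, dist_zero_right]
  set w : I → ℝ := fun i => ∑ j ∈ t.filter (fun j => p j = i), r j with hwdef
  have hgroup : ∑ j ∈ t, r j • (a (p j) • b (p j))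
      = ∑ i ∈ t.image p, w i • (a i • b i) := by
    rw [← Finset.sum_fiberwise_of_maps_to (fun j hj => Finset.mem_image_of_mem p hj)
      (fun j => r j • (a (p j) • b (p j)))]
    refine Finset.sum_congr rfl fun i _ => ?_
    rw [hwdef]
    rw [Finset.sum_smul]
    refine Finset.sum_congr rfl fun j hj => ?_
    rw [(Finset.mem_filter.1 hj).2]
  have hOF := (b.orthonormal).orthogonalFamily
  have hterm : ∀ i, w i • (a i • b i)
      = LinearIsometry.toSpanSingleton ℂ H (b.orthonormal.1 i) ((w i : ℂ) * a i) := by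
    intro i
    rw [LinearIsometry.toSpanSingleton_apply, mul_smul, Complex.coe_smul]
  have hnorm : ‖∑ i ∈ t.image p, w i • (a i • b i)‖ ^ 2
      = ∑ i ∈ t.image p, (w i) ^ 2 * ‖a i‖ ^ 2 := by
    simp_rw [hterm]
    rw [hOF.norm_sum]
    refine Finset.sum_congr rfl fun i _ => ?_
    rw [norm_mul, mul_pow, Complex.norm_real, Real.norm_eq_abs, sq_abs]
  have hw0 : ∀ i, 0 ≤ w i := fun i => Finset.sum_nonneg fun j _ => hr0 j
  have hwfil : ∀ i, w i = ∑ j ∈ t.filter (fun j => p j = i), ({j : J | p j = i}.indicator r) j := by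
    intro i
    refine Finset.sum_congr rfl fun j hj => ?_
    exact (Set.indicator_of_mem (s := {j : J | p j = i}) ((Finset.mem_filter.1 hj).2) r).symm
  have hindnn : ∀ (i : I) (j : J), 0 ≤ ({j : J | p j = i}.indicator r) j :=
    fun i j => Set.indicator_nonneg (fun x _ => hr0 x) j
  have hw1 : ∀ i, w i ≤ 1 := by
    intro i
    rw [hwfil]
    exact le_trans (Summable.sum_le_tsum _ (fun j _ => hindnn i j) (hfs i)) (hf1 i)
  have hwδ : ∀ i ∈ I₀, w i < δ := by
    intro i hi
    rw [hwfil]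
    refine hK i _ ?_
    rw [Finset.disjoint_left]
    intro x hx hxK
    exact (Finset.disjoint_left.1 ht) (Finset.mem_of_mem_filter x hx)
      (Finset.mem_biUnion.2 ⟨i, hi, hxK⟩)
  rw [show ∑ j ∈ t, r j • (a (p j) • b (p j)) = ∑ i ∈ t.image p, w i • (a i • b i) from hgroup]
  have hsq' : ‖∑ i ∈ t.image p, w i • (a i • b i)‖ ^ 2 < ε ^ 2 := by
    rw [hnorm]
    rw [← Finset.sum_filter_add_sum_filter_not (t.image p) (· ∈ I₀)]
    have h1 : ∑ i ∈ (t.image p).filter (· ∈ I₀), (w i) ^ 2 * ‖a i‖ ^ 2 ≤ ε ^ 2 / 2 := by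
      have hle : ∑ i ∈ (t.image p).filter (· ∈ I₀), (w i) ^ 2 * ‖a i‖ ^ 2
          ≤ ∑ i ∈ (t.image p).filter (· ∈ I₀), δ * ‖a i‖ ^ 2 := by
        refine Finset.sum_le_sum fun i hi => ?_
        have hiI₀ : i ∈ I₀ := (Finset.mem_filter.1 hi).2
        have h := hwδ i hiI₀
        have : (w i) ^ 2 ≤ δ := by nlinarith [hw0 i, hw1 i]
        have := sq_nonneg (‖a i‖)
        nlinarith
      refine le_trans hle ?_
      rw [← Finset.mul_sum]
      have hsumle : ∑ i ∈ (t.image p).filter (· ∈ I₀), ‖a i‖ ^ 2 ≤ C :=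
        Summable.sum_le_tsum _ (fun i _ => by positivity) hsq
      have : δ * ∑ i ∈ (t.image p).filter (· ∈ I₀), ‖a i‖ ^ 2 ≤ δ * C :=
        mul_le_mul_of_nonneg_left hsumle (le_of_lt hδpos)
      refine le_trans this ?_
      have h2 : δ * C ≤ (ε ^ 2 / (2 * (C + 1))) * C :=
        mul_le_mul_of_nonneg_right hδ2 hC0
      refine le_trans h2 ?_
      rw [div_mul_eq_mul_div, div_le_div_iff₀ (by positivity) (by positivity)]
      nlinarith [sq_nonneg ε]
    have h2 : ∑ i ∈ (t.image p).filter (· ∉ I₀), (w i) ^ 2 * ‖a i‖ ^ 2 < ε ^ 2 / 2 := by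
      have hle : ∑ i ∈ (t.image p).filter (· ∉ I₀), (w i) ^ 2 * ‖a i‖ ^ 2
          ≤ ∑ i ∈ (t.image p).filter (· ∉ I₀), ‖a i‖ ^ 2 := by
        refine Finset.sum_le_sum fun i hi => ?_
        have h1 : (w i) ^ 2 ≤ 1 := by nlinarith [hw0 i, hw1 i]
        nlinarith [sq_nonneg (‖a i‖)]
      refine lt_of_le_of_lt hle ?_
      refine hI₀ _ ?_
      rw [Finset.disjoint_left]
      intro x hx
      exact (Finset.mem_filter.1 hx).2
    linarith
  nlinarith [norm_nonneg (∑ i ∈ t.image p, w i • (a i • b i)), hε]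

private def eqvSigma {J I : Type*} (p : J → I) (E : J → ℝ) (Δ : Set ℝ) :
    (Σ i : I, {j : J // p j = i ∧ E j ∈ Δ}) ≃ {j : J // E j ∈ Δ} where
  toFun x := ⟨x.2.1, x.2.2.2⟩
  invFun j := ⟨p j.1, ⟨j.1, rfl, j.2⟩⟩
  left_inv := fun ⟨i, j, hj, hj2⟩ => by subst hj; rfl
  right_inv := fun j => rfl

set_option maxHeartbeats 1000000 in
/-- For a commutative-type Parseval frame `e j = c j • b (p j)` built from an
orthonormal basis `b`, a surjection `p`, nonzero scalars `c` with `∑_{j ∈ p⁻¹ i} |c j|² = 1`,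
and pairwise distinct reals `E`, the kernel `μ Δ i = ∑_{j ∈ p⁻¹ i, E j ∈ Δ} |c j|²` is
(a) a probability measure in `Δ` for each `i`, and (b) smears the projection-valued measure of
the basis into the POVM: `F_{E,e}(Δ) f = ∑_i μ Δ i • ⟨f, b i⟩ b i`. -/
theorem stmt_1 {H I J : Type*} [NormedAddCommGroup H] [InnerProductSpace ℂ H] [CompleteSpace H]
    [Countable J] (b : HilbertBasis I ℂ H) (p : J → I) (hp : Function.Surjective p)
    (c : J → ℂ) (hc : ∀ j, c j ≠ 0)
    (hone : ∀ i : I, HasSum (fun j : {j : J // p j = i} => ‖c j.1‖ ^ 2) 1)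
    (e : J → H) (he : ∀ j, e j = c j • b (p j))
    (E : J → ℝ) (hE : Function.Injective E)
    (μ : Set ℝ → I → ℝ)
    (hμ : ∀ (Δ : Set ℝ) (i : I),
      μ Δ i = ∑' j : {j : J // p j = i ∧ E j ∈ Δ}, ‖c j.1‖ ^ 2) :
    (∀ i : I,
        μ Set.univ i = 1 ∧ (∀ Δ : Set ℝ, 0 ≤ μ Δ i) ∧
        (∀ Δ : ℕ → Set ℝ, (∀ n, MeasurableSet (Δ n)) → Pairwise (Function.onFun Disjoint Δ) →
          HasSum (fun n => μ (Δ n) i) (μ (⋃ n, Δ n) i))) ∧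
      (∀ Δ : Set ℝ, MeasurableSet Δ → ∀ f : H,
        (∑' j : {j : J // E j ∈ Δ}, ⟪e j.1, f⟫_ℂ • e j.1) =
          ∑' i : I, μ Δ i • (⟪b i, f⟫_ℂ • b i)) := by
  classical
  set r : J → ℝ := fun j => ‖c j‖ ^ 2 with hrdef
  have hr0 : ∀ j, 0 ≤ r j := fun j => by positivity
  have hind : ∀ i : I, HasSum ({j : J | p j = i}.indicator r) 1 := fun i =>
    (hasSum_subtype_iff_indicator).1 (hone i)
  have hfs : ∀ i : I, Summable ({j : J | p j = i}.indicator r) := fun i => (hind i).summable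
  have hf1 : ∀ i : I, ∑' j, ({j : J | p j = i}.indicator r) j ≤ 1 := fun i =>
    le_of_eq (hind i).tsum_eq
  have hsubsum : ∀ (s : Set J) (i : I), s ⊆ {j : J | p j = i} → Summable (s.indicator r) :=
    fun s i hs => Summable.of_nonneg_of_le
      (fun j => Set.indicator_nonneg (fun x _ => hr0 x) j)
      (fun j => Set.indicator_le_indicator_of_subset hs (fun x => hr0 x) j)
      (hfs i)
  constructor
  · -- part (a)
    intro i
    refine ⟨?_, ?_, ?_⟩
    · -- μ univ = 1
      rw [hμ]
      have h1 : HasSum (fun j : {j : J // p j = i ∧ E j ∈ Set.univ} => r j.1) 1 := by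
        refine (Equiv.hasSum_iff (Equiv.subtypeEquivRight ?_)).1 (hone i)
        intro j; simp
      exact h1.tsum_eq
    · -- nonneg
      intro Δ
      rw [hμ]
      exact tsum_nonneg fun j => hr0 j.1
    · -- countable additivity
      intro Δ hmeas hdisj
      set A : ℕ → Set J := fun n => {j | p j = i ∧ E j ∈ Δ n} with hA
      have hdisjA : Pairwise (Function.onFun Disjoint A) := by
        intro n m hnm
        simp only [Function.onFun, Set.disjoint_left]
        rintro j ⟨-, h1⟩ ⟨-, h2⟩
        exact Set.disjoint_left.1 (hdisj hnm) h1 h2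
      have hsubA : (⋃ n, A n) ⊆ {j : J | p j = i} := by
        rintro j hj
        obtain ⟨n, h⟩ := Set.mem_iUnion.1 hj
        exact h.1
      have hSum_union : Summable fun j : ↥(⋃ n, A n) => r j.1 :=
        summable_subtype_iff_indicator.2 (hsubsum _ i hsubA)
      have hval : ∑' j : ↥(⋃ n, A n), r j.1 = μ (⋃ n, Δ n) i := by
        rw [hμ]
        have hset : (⋃ n, A n) = {j : J | p j = i ∧ E j ∈ ⋃ n, Δ n} := by
          ext j
          simp only [hA, Set.mem_iUnion, Set.mem_setOf_eq]
          tauto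
        rw [hset]
        rfl
      have hG : HasSum (fun x : Σ n : ℕ, ↥(A n) => r x.2.1) (μ (⋃ n, Δ n) i) := by
        have h := hSum_union.hasSum
        rw [hval] at h
        exact ((Set.unionEqSigmaOfDisjoint hdisjA).symm.hasSum_iff).2 h
      refine hG.sigma ?_
      intro n
      have hs : Summable fun j : ↥(A n) => r j.1 :=
        summable_subtype_iff_indicator.2 (hsubsum _ i fun j hj => hj.1)
      have hv : ∑' j : ↥(A n), r j.1 = μ (Δ n) i := by rw [hμ]; rfl
      exact hv ▸ hs.hasSum
  · -- part (b)
    intro Δ hΔmeas f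
    have hsq : Summable fun i => ‖⟪b i, f⟫_ℂ‖ ^ 2 := by
      have h1 := b.summable_inner_mul_inner f f
      have h2 : (fun i => ⟪f, b i⟫_ℂ * ⟪b i, f⟫_ℂ) = fun i => ((‖⟪b i, f⟫_ℂ‖ ^ 2 : ℝ) : ℂ) := by
        funext i
        rw [← inner_conj_symm (b i) f, RCLike.mul_conj]
        norm_cast
        rw [RCLike.norm_conj]
        rfl
      rw [h2] at h1
      have h3 := h1.map Complex.reCLM.toLinearMap.toAddMonoidHom Complex.reCLM.continuous
      refine h3.congr fun i => ?_
      simp only [Function.comp_apply, LinearMap.toAddMonoidHom_coe,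
        ContinuousLinearMap.coe_coe, Complex.reCLM_apply, Complex.ofReal_re]
    set r' : J → ℝ := fun j => if E j ∈ Δ then r j else 0 with hr'def
    have hr'0 : ∀ j, 0 ≤ r' j := by
      intro j
      rw [hr'def]
      dsimp only
      split
      · exact hr0 j
      · exact le_refl 0
    have heq : ∀ i : I, {j : J | p j = i}.indicator r'
        = ({j : J | p j = i ∧ E j ∈ Δ}).indicator r := by
      intro i
      funext j
      by_cases h1 : p j = i <;> by_cases h2 : E j ∈ Δ <;>
        simp [Set.indicator, h1, h2, hr'def]
    have hfs' : ∀ i, Summable ({j : J | p j = i}.indicator r') := fun i => by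
      rw [heq i]
      exact hsubsum _ i fun j hj => hj.1
    have hf1' : ∀ i, ∑' j, ({j : J | p j = i}.indicator r') j ≤ 1 := fun i => by
      refine le_trans (Summable.tsum_le_tsum ?_ (hfs' i) (hfs i)) (hf1 i)
      intro j
      rw [heq i]
      exact Set.indicator_le_indicator_of_subset (fun x hx => hx.1) (fun x => hr0 x) j
    have hkey : Summable (fun j : J => r' j • (⟪b (p j), f⟫_ℂ • b (p j))) :=
      key_summable b p r' hr'0 hfs' hf1' (fun i => ⟪b i, f⟫_ℂ) hsq
    have hGind : {j : J | E j ∈ Δ}.indicator (fun j => r j • (⟪b (p j), f⟫_ℂ • b (p j)))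
        = fun j => r' j • (⟪b (p j), f⟫_ℂ • b (p j)) := by
      funext j
      by_cases h : E j ∈ Δ <;> simp [Set.indicator, h, hr'def]
    have hkey' : Summable ({j : J | E j ∈ Δ}.indicator
        (fun j => r j • (⟪b (p j), f⟫_ℂ • b (p j)))) := by
      rw [hGind]; exact hkey
    have hGsub : Summable fun j : {j : J // E j ∈ Δ} => r j.1 • (⟪b (p j.1), f⟫_ℂ • b (p j.1)) :=
      (summable_subtype_iff_indicator (s := {j : J | E j ∈ Δ})
        (f := fun j => r j • (⟪b (p j), f⟫_ℂ • b (p j)))).2 hkey'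
    have hterm : ∀ j : J, ⟪e j, f⟫_ℂ • e j = r j • (⟪b (p j), f⟫_ℂ • b (p j)) := by
      intro j
      have hcc : (starRingEnd ℂ) (c j) * c j = ((r j : ℝ) : ℂ) := by
        rw [RCLike.conj_mul]
        norm_cast
      have h1 : (r j : ℝ) • (⟪b (p j), f⟫_ℂ • b (p j)) = (((r j : ℝ) : ℂ) * ⟪b (p j), f⟫_ℂ) • b (p j) := by
        rw [← Complex.coe_smul, smul_smul]
      rw [he j, inner_smul_left, smul_smul, h1]
      congr 1
      calc (starRingEnd ℂ) (c j) * ⟪b (p j), f⟫_ℂ * c j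
          = ((starRingEnd ℂ) (c j) * c j) * ⟪b (p j), f⟫_ℂ := by ring
        _ = ((r j : ℝ) : ℂ) * ⟪b (p j), f⟫_ℂ := by rw [hcc]
    have hLHS : (∑' j : {j : J // E j ∈ Δ}, ⟪e j.1, f⟫_ℂ • e j.1)
        = ∑' j : {j : J // E j ∈ Δ}, r j.1 • (⟪b (p j.1), f⟫_ℂ • b (p j.1)) :=
      tsum_congr fun j => hterm j.1
    refine Eq.trans hLHS ?_
    have hFs : Summable fun x : Σ i : I, {j : J // p j = i ∧ E j ∈ Δ} =>
        r x.2.1 • (⟪b (p x.2.1), f⟫_ℂ • b (p x.2.1)) := by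
      have h := hGsub.comp_injective (eqvSigma p E Δ).injective
      exact h
    have h2 : (∑' j : {j : J // E j ∈ Δ}, r j.1 • (⟪b (p j.1), f⟫_ℂ • b (p j.1)))
        = ∑' (i : I) (j : {j : J // p j = i ∧ E j ∈ Δ}),
            r j.1 • (⟪b (p j.1), f⟫_ℂ • b (p j.1)) := by
      rw [← (eqvSigma p E Δ).tsum_eq]
      exact Summable.tsum_sigma hFs
    refine Eq.trans h2 ?_
    refine tsum_congr fun i => ?_
    have hμsum : Summable fun j : {j : J // p j = i ∧ E j ∈ Δ} => r j.1 :=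
      (summable_subtype_iff_indicator (s := {j : J | p j = i ∧ E j ∈ Δ}) (f := r)).2
        (hsubsum _ i fun j hj => hj.1)
    calc (∑' j : {j : J // p j = i ∧ E j ∈ Δ}, r j.1 • (⟪b (p j.1), f⟫_ℂ • b (p j.1)))
        = ∑' j : {j : J // p j = i ∧ E j ∈ Δ}, r j.1 • (⟪b i, f⟫_ℂ • b i) :=
          tsum_congr fun j => by rw [j.2.1]
      _ = (∑' j : {j : J // p j = i ∧ E j ∈ Δ}, r j.1) • (⟪b i, f⟫_ℂ • b i) :=
          Summable.tsum_smul_const hμsum _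
      _ = μ Δ i • (⟪b i, f⟫_ℂ • b i) := by rw [hμ]
end

section
/- Let H be a complex Hilbert space, (γ_i)_{i∈I} an orthonormal basis of H, p : J → I a surjection (J countable), and (c_j)_{j∈J} nonzero complex scalars with ∑_{j∈p⁻¹(i)} |c_j|² = 1 for every i ∈ I, so that e_j = c_j γ_{p(j)} defines a Parseval frame. Let (E_j)_{j∈J} be pairwise distinct real numbers and assume that for every i ∈ I the series ∑_{j∈p⁻¹(i)} |E_j| |c_j|² converges; set λ_i = ∑_{j∈p⁻¹(i)} E_j |c_j|². Let D = { f ∈ H : the family (E_j ⟨f, e_j⟩ e_j)_{j∈J} is unconditionally summable in H } and define H_{E,e} f = ∑_{j∈J} E_j ⟨f, e_j⟩ e_j for f ∈ D. Then: (a) γ_i ∈ D and H_{E,e} γ_i = λ_i γ_i for every i ∈ I (in particular D is dense in H); (b) for every f ∈ D, H_{E,e} f = ∑_{i∈I} λ_i ⟨f, γ_i⟩ γ_i; (c) H_{E,e} is symmetric: ⟨H_{E,e} f, g⟩ = ⟨f, H_{E,e} g⟩ for all f, g ∈ D. -/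
open scoped InnerProductSpace

/-- For the commutative-type Parseval frame `e j = c j • b (p j)` and pairwise
distinct reals `E` with `∑_{j ∈ p⁻¹ i} |E j| |c j|² < ∞`, the operator
`T f = ∑_j E j ⟨f, e j⟩ e j` with domain `D` (unconditional summability) satisfies:
(a) each `b i ∈ D` is an eigenvector with eigenvalue `λ i = ∑_{j ∈ p⁻¹ i} E j |c j|²`
(so `D` is dense); (b) `T f = ∑_i λ i ⟨f, b i⟩ b i` on `D`; (c) `T` is symmetric on `D`. -/
theorem stmt_3 {H I J : Type*} [NormedAddCommGroup H] [InnerProductSpace ℂ H] [CompleteSpace H]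
    [Countable J] (b : HilbertBasis I ℂ H) (p : J → I) (hp : Function.Surjective p)
    (c : J → ℂ) (hc : ∀ j, c j ≠ 0)
    (hone : ∀ i : I, HasSum (fun j : {j : J // p j = i} => ‖c j.1‖ ^ 2) 1)
    (e : J → H) (he : ∀ j, e j = c j • b (p j))
    (E : J → ℝ) (hE : Function.Injective E)
    (habs : ∀ i : I, Summable (fun j : {j : J // p j = i} => |E j.1| * ‖c j.1‖ ^ 2))
    (lam : I → ℝ) (hlam : ∀ i : I, lam i = ∑' j : {j : J // p j = i}, E j.1 * ‖c j.1‖ ^ 2)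
    (D : Set H) (hD : D = {f : H | Summable fun j => E j • (⟪e j, f⟫_ℂ • e j)})
    (T : H → H) (hT : ∀ f : H, T f = ∑' j, E j • (⟪e j, f⟫_ℂ • e j)) :
    (∀ i : I, b i ∈ D ∧ T (b i) = lam i • b i) ∧ Dense D ∧
      (∀ f ∈ D, T f = ∑' i : I, lam i • (⟪b i, f⟫_ℂ • b i)) ∧
      (∀ f ∈ D, ∀ g ∈ D, ⟪T f, g⟫_ℂ = ⟪f, T g⟫_ℂ) := by
  classical
  have hip : ∀ i i' : I, ⟪b i, b i'⟫_ℂ = if i = i' then 1 else 0 :=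
    orthonormal_iff_ite.mp b.orthonormal
  -- key pointwise rewrite of the summand
  have key : ∀ (f : H) (j : J),
      E j • (⟪e j, f⟫_ℂ • e j) = (E j * ‖c j‖ ^ 2) • (⟪b (p j), f⟫_ℂ • b (p j)) := by
    intro f j
    rw [he j, inner_smul_left]
    match_scalars
    have h : (starRingEnd ℂ) (c j) * c j = (‖c j‖ : ℂ) ^ 2 := RCLike.conj_mul (c j)
    simp only [Complex.coe_algebraMap]
    linear_combination ⟪b (p j), f⟫_ℂ * (E j : ℂ) * h
  -- the scalar family over each fiber has sum `lam i`
  have hscal : ∀ i : I, HasSum (fun j : {j : J // p j = i} => E j.1 * ‖c j.1‖ ^ 2) (lam i) := by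
    intro i
    have hsummable : Summable (fun j : {j : J // p j = i} => E j.1 * ‖c j.1‖ ^ 2) := by
      refine Summable.of_abs ?_
      have habs' : ∀ j : {j : J // p j = i}, |E j.1 * ‖c j.1‖ ^ 2| = |E j.1| * ‖c j.1‖ ^ 2 := by
        intro j
        rw [abs_mul, abs_of_nonneg (by positivity : (0:ℝ) ≤ ‖c j.1‖ ^ 2)]
      simpa only [habs'] using habs i
    rw [hlam i]
    exact hsummable.hasSum
  have hfib : ∀ (i : I) (v : H),
      HasSum (fun j : {j : J // p j = i} => (E j.1 * ‖c j.1‖ ^ 2) • v) (lam i • v) :=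
    fun i v => (hscal i).smul_const v
  -- fiber has-sums for the actual summand
  have hfibT : ∀ (f : H) (i : I),
      HasSum (fun j : (p ⁻¹' {i} : Set J) => E j.1 • (⟪e j.1, f⟫_ℂ • e j.1))
        (lam i • (⟪b i, f⟫_ℂ • b i)) := by
    intro f i
    have h := hfib i (⟪b i, f⟫_ℂ • b i)
    have heq : ∀ j : {j : J // p j = i},
        (E j.1 * ‖c j.1‖ ^ 2) • (⟪b i, f⟫_ℂ • b i) = E j.1 • (⟪e j.1, f⟫_ℂ • e j.1) := by
      intro j
      rw [key f j.1, j.2]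
    simp only [heq] at h
    exact h
  -- part (a): eigenvectors
  have hbi : ∀ i : I, HasSum (fun j : J => E j • (⟪e j, b i⟫_ℂ • e j)) (lam i • b i) := by
    intro i
    have hsupp : (Function.support fun j : J => E j • (⟪e j, b i⟫_ℂ • e j)) ⊆ p ⁻¹' {i} := by
      intro j hj
      simp only [Function.mem_support] at hj
      by_contra hne
      apply hj
      have hzero : ⟪b (p j), b i⟫_ℂ = 0 := by
        rw [hip, if_neg]
        exact fun hpj => hne (by simpa using hpj)
      rw [key, hzero]
      simp
    rw [← hasSum_subtype_iff_of_support_subset hsupp]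
    have := hfibT (b i) i
    rw [hip i i, if_pos rfl, one_smul] at this
    exact this
  have ha : ∀ i : I, b i ∈ D ∧ T (b i) = lam i • b i := by
    intro i
    constructor
    · rw [hD]; exact (hbi i).summable
    · rw [hT]; exact (hbi i).tsum_eq
  have hadd : ∀ f g : H, f ∈ D → g ∈ D → f + g ∈ D := by
    intro f g hf hg
    rw [hD] at hf hg ⊢
    have := hf.add hg
    refine this.congr fun j => ?_
    simp [inner_add_right, add_smul, smul_add]
  have hzero : (0 : H) ∈ D := by
    rw [hD]
    simpa using summable_zero
  have hsmul : ∀ (z : ℂ) (f : H), f ∈ D → z • f ∈ D := by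
    intro z f hf
    rw [hD] at hf ⊢
    have := hf.const_smul z
    refine this.congr fun j => ?_
    rw [inner_smul_right, mul_smul, smul_comm]
  refine ⟨ha, ?_, ?_, ?_⟩
  · -- density
    let S : Submodule ℂ H :=
      { carrier := D
        add_mem' := fun hf hg => hadd _ _ hf hg
        zero_mem' := hzero
        smul_mem' := fun z f hf => hsmul z f hf }
    have hle : Submodule.span ℂ (Set.range b) ≤ S := by
      rw [Submodule.span_le]
      rintro _ ⟨i, rfl⟩
      exact (ha i).1
    have hdense : Dense (↑(Submodule.span ℂ (Set.range b)) : Set H) := by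
      rw [dense_iff_closure_eq, ← Submodule.topologicalClosure_coe, b.dense_span,
        Submodule.top_coe]
    exact hdense.mono hle
  · -- part (b)
    intro f hf
    rw [hD] at hf
    have hTf : HasSum (fun j => E j • (⟪e j, f⟫_ℂ • e j)) (T f) := by
      rw [hT f]; exact hf.hasSum
    have h2 := hTf.tsum_fiberwise p
    rw [← h2.tsum_eq]
    congr 1
    funext i
    exact (hfibT f i).tsum_eq
  · -- part (c)
    intro f hf g hg
    rw [hD] at hf hg
    have hTf : HasSum (fun j => E j • (⟪e j, f⟫_ℂ • e j)) (T f) := by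
      rw [hT f]; exact hf.hasSum
    have hTg : HasSum (fun j => E j • (⟪e j, g⟫_ℂ • e j)) (T g) := by
      rw [hT g]; exact hg.hasSum
    have h1 : HasSum (fun j => ⟪g, E j • (⟪e j, f⟫_ℂ • e j)⟫_ℂ) ⟪g, T f⟫_ℂ :=
      (innerSL ℂ g).hasSum hTf
    have h2 : HasSum (fun j => ⟪f, E j • (⟪e j, g⟫_ℂ • e j)⟫_ℂ) ⟪f, T g⟫_ℂ :=
      (innerSL ℂ f).hasSum hTg
    have hconj : ⟪T f, g⟫_ℂ = (starRingEnd ℂ) ⟪g, T f⟫_ℂ := (inner_conj_symm _ _).symm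
    rw [hconj, ← h1.tsum_eq, ← h2.tsum_eq, starRingEnd_apply, tsum_star]
    congr 1
    funext j
    rw [key f j, key g j, RCLike.real_smul_eq_coe_smul (K := ℂ),
      RCLike.real_smul_eq_coe_smul (K := ℂ)]
    simp only [inner_smul_right, star_mul', RCLike.star_def, inner_conj_symm,
      RCLike.conj_ofReal]
    ring
end

section
/- Let H be a complex Hilbert space, (γ_i)_{i∈I} an orthonormal basis of H, p : J → I a surjection (J countable), and (c_j)_{j∈J} nonzero complex scalars with ∑_{j∈p⁻¹(i)} |c_j|² = 1 for every i ∈ I, so that e_j = c_j γ_{p(j)} defines a Parseval frame. Let (E_j)_{j∈J} be real numbers with sup_j |E_j| < ∞. Then for every f ∈ H the family (E_j ⟨f, e_j⟩ e_j)_{j∈J} is unconditionally summable, and setting λ_i = ∑_{j∈p⁻¹(i)} E_j |c_j|² (an absolutely convergent series), the everywhere-defined operator H f = ∑_{j∈J} E_j ⟨f, e_j⟩ e_j satisfies H f = ∑_{i∈I} λ_i ⟨f, γ_i⟩ γ_i; H is a bounded self-adjoint operator on H, and its spectrum equals the closure of the set { λ_i : i ∈ I }. -/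
open scoped InnerProductSpace

open scoped ENNReal
set_option linter.unusedSectionVars false
set_option maxHeartbeats 1000000

section diag
variable {H I : Type*} [NormedAddCommGroup H] [InnerProductSpace ℂ H] [CompleteSpace H]
  (b : HilbertBasis I ℂ H) (m : I → ℂ) {W : ℝ} (hm : ∀ i, ‖m i‖ ≤ W)

include hm in
theorem diag_memℓp (f : H) : Memℓp (fun i => m i * b.repr f i) 2 := by
  apply memℓp_gen
  have h2 : (2 : ℝ≥0∞).toReal = 2 := by norm_num
  have hs : Summable fun i => ‖b.repr f i‖ ^ (2:ℝ) := by
    simpa [h2] using (lp.memℓp (b.repr f)).summable (by norm_num [h2])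
  simp only [h2]
  have hs' : Summable fun i => (W^2) * ‖b.repr f i‖ ^ (2:ℝ) := hs.mul_left _
  refine hs'.of_nonneg_of_le (fun i => by positivity) fun i => ?_
  have h0 : (0:ℝ) ≤ ‖m i‖ := norm_nonneg _
  have hW : 0 ≤ W := le_trans h0 (hm i)
  calc ‖m i * b.repr f i‖ ^ (2:ℝ) = (‖m i‖ * ‖b.repr f i‖) ^ (2:ℝ) := by rw [norm_mul]
    _ ≤ (W * ‖b.repr f i‖) ^ (2:ℝ) := by
        apply Real.rpow_le_rpow (by positivity)
        · exact mul_le_mul_of_nonneg_right (hm i) (norm_nonneg _)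
        · norm_num
    _ = W^2 * ‖b.repr f i‖ ^ (2:ℝ) := by
        rw [Real.mul_rpow hW (norm_nonneg _), ← Real.rpow_natCast W 2]; norm_num

/-- The diagonal element of `ℓ²(I)` associated to `f`. -/
noncomputable def diagLp (f : H) : lp (fun _ : I => ℂ) 2 :=
  ⟨fun i => m i * b.repr f i, diag_memℓp b m hm f⟩

include hm in
theorem diagLp_norm (f : H) : ‖diagLp b m hm f‖ ≤ (max W 0) * ‖f‖ := by
  have h2 : (0:ℝ) < (2 : ℝ≥0∞).toReal := by norm_num
  have key : ‖diagLp b m hm f‖ ^ (2:ℝ) ≤ ((max W 0) * ‖f‖) ^ (2:ℝ) := by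
    rw [← b.repr.norm_map f]
    rw [Real.mul_rpow (le_max_right _ _) (norm_nonneg _)]
    have h1 := lp.norm_rpow_eq_tsum h2 (diagLp b m hm f)
    have h2' := lp.norm_rpow_eq_tsum h2 (b.repr f)
    simp only [ENNReal.toReal_ofNat] at h1 h2' ⊢
    rw [h1, h2', ← tsum_mul_left]
    have hsum : Summable fun i => ‖b.repr f i‖ ^ (2:ℝ) := by
      simpa using (lp.memℓp (b.repr f)).summable (by norm_num)
    refine Summable.tsum_le_tsum (fun i => ?_) ?_ (hsum.mul_left _)
    · show ‖(diagLp b m hm f) i‖ ^ (2:ℝ) ≤ _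
      have : (diagLp b m hm f) i = m i * b.repr f i := rfl
      rw [this, norm_mul]
      calc (‖m i‖ * ‖b.repr f i‖) ^ (2:ℝ) ≤ ((max W 0) * ‖b.repr f i‖) ^ (2:ℝ) := by
            apply Real.rpow_le_rpow (by positivity)
              (mul_le_mul_of_nonneg_right (le_trans (hm i) (le_max_left _ _)) (norm_nonneg _))
              (by norm_num)
        _ = (max W 0) ^ (2:ℝ) * ‖b.repr f i‖ ^ (2:ℝ) :=
            Real.mul_rpow (le_max_right _ _) (norm_nonneg _)
    · -- summability of lhs
      have := (lp.memℓp (diagLp b m hm f)).summable (p := 2) (by norm_num)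
      simpa using this
  exact (Real.rpow_le_rpow_iff (norm_nonneg _) (by positivity) (by norm_num)).mp key

/-- Diagonal operator w.r.t. the Hilbert basis `b` with bounded symbol `m`. -/
noncomputable def diagOp : H →L[ℂ] H :=
  LinearMap.mkContinuous
    { toFun := fun f => b.repr.symm (diagLp b m hm f)
      map_add' := fun f g => by
        show b.repr.symm (diagLp b m hm (f+g)) = _
        rw [← map_add]
        congr 1
        apply lp.ext
        funext i
        show m i * (b.repr (f+g)) i = (diagLp b m hm f + diagLp b m hm g) i
        rw [lp.coeFn_add, Pi.add_apply, map_add, lp.coeFn_add, Pi.add_apply, mul_add]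
        rfl
      map_smul' := fun a f => by
        show b.repr.symm (diagLp b m hm (a • f)) = _
        rw [← map_smul]
        congr 1
        apply lp.ext
        funext i
        show m i * (b.repr (a • f)) i = (a • diagLp b m hm f) i
        rw [map_smul, lp.coeFn_smul, lp.coeFn_smul, Pi.smul_apply, Pi.smul_apply]
        show m i * (a * b.repr f i) = a * (m i * b.repr f i)
        ring }
    (max W 0)
    (fun f => by
      show ‖b.repr.symm (diagLp b m hm f)‖ ≤ _
      rw [b.repr.symm.norm_map]
      exact diagLp_norm b m hm f)

theorem diagOp_repr (f : H) (i : I) : b.repr (diagOp b m hm f) i = m i * b.repr f i := by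
  have : diagOp b m hm f = b.repr.symm (diagLp b m hm f) := rfl
  rw [this, LinearIsometryEquiv.apply_symm_apply]
  rfl

include hm in
theorem diagOp_hasSum (f : H) :
    HasSum (fun i => (m i * b.repr f i) • b i) (diagOp b m hm f) := by
  exact b.hasSum_repr_symm (diagLp b m hm f)

include hm in
theorem diagOp_selfAdjoint (hreal : ∀ i, (starRingEnd ℂ) (m i) = m i) :
    IsSelfAdjoint (diagOp b m hm) := by
  rw [ContinuousLinearMap.isSelfAdjoint_iff_isSymmetric]
  intro f g
  show ⟪diagOp b m hm f, g⟫_ℂ = ⟪f, diagOp b m hm g⟫_ℂ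
  rw [← b.repr.inner_map_map (diagOp b m hm f) g, ← b.repr.inner_map_map f (diagOp b m hm g),
    lp.inner_eq_tsum, lp.inner_eq_tsum]
  congr 1
  funext i
  simp only [RCLike.inner_apply]
  rw [diagOp_repr, diagOp_repr, map_mul, hreal]
  ring

theorem diagOp_mul {m' : I → ℂ} {W' : ℝ} (hm' : ∀ i, ‖m' i‖ ≤ W')
    (hmm' : ∀ i, ‖m i * m' i‖ ≤ W * W') :
    diagOp b m hm * diagOp b m' hm' = diagOp b (fun i => m i * m' i) hmm' := by
  ext f
  apply b.repr.injective
  apply lp.ext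
  funext i
  show b.repr (diagOp b m hm (diagOp b m' hm' f)) i = _
  rw [diagOp_repr, diagOp_repr, diagOp_repr, mul_assoc]

theorem diagOp_one : diagOp b (fun _ => 1) (fun _ => le_refl (‖(1:ℂ)‖)) = 1 := by
  ext f
  apply b.repr.injective
  apply lp.ext
  funext i
  show b.repr (diagOp b _ _ f) i = b.repr f i
  rw [diagOp_repr, one_mul]

theorem diagOp_congr {m2 : I → ℂ} {W2 : ℝ} (hm2 : ∀ i, ‖m2 i‖ ≤ W2) (h : ∀ i, m i = m2 i) :
    diagOp b m hm = diagOp b m2 hm2 := by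
  ext f
  apply b.repr.injective
  apply lp.ext
  funext i
  show b.repr (diagOp b m hm f) i = b.repr (diagOp b m2 hm2 f) i
  rw [diagOp_repr, diagOp_repr, h]

theorem algebraMap_sub_diagOp (μ : ℂ)
    (hb : ∀ i, ‖μ - m i‖ ≤ ‖μ‖ + W) :
    algebraMap ℂ (H →L[ℂ] H) μ - diagOp b m hm = diagOp b (fun i => μ - m i) hb := by
  ext f
  apply b.repr.injective
  apply lp.ext
  funext i
  show b.repr (algebraMap ℂ (H →L[ℂ] H) μ f - diagOp b m hm f) i = _
  rw [map_sub, Algebra.algebraMap_eq_smul_one]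
  show (b.repr (μ • f) - b.repr (diagOp b m hm f)) i = _
  rw [lp.coeFn_sub, Pi.sub_apply, map_smul, diagOp_repr, lp.coeFn_smul, Pi.smul_apply]
  show μ * b.repr f i - m i * b.repr f i = _
  rw [diagOp_repr]
  ring

include hm in
theorem diagOp_spectrum : spectrum ℂ (diagOp b m hm) = closure (Set.range m) := by
  apply Set.eq_of_subset_of_subset
  · -- spectrum ⊆ closure
    intro mu hmu
    by_contra hclo
    rw [spectrum.mem_iff] at hmu
    apply hmu
    -- extract a positive distance
    rw [Metric.mem_closure_iff] at hclo
    push_neg at hclo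
    obtain ⟨d, hd, hdist⟩ := hclo
    have hdle : ∀ i, d ≤ ‖mu - m i‖ := fun i => by
      simpa [Complex.dist_eq] using hdist (m i) (Set.mem_range_self i)
    have hne : ∀ i, mu - m i ≠ 0 := fun i h => by
      have := hdle i; rw [h, norm_zero] at this; linarith
    have hbA : ∀ i, ‖mu - m i‖ ≤ ‖mu‖ + W :=
      fun i => le_trans (norm_sub_le _ _) (by have := hm i; linarith)
    have hbB : ∀ i, ‖(mu - m i)⁻¹‖ ≤ d⁻¹ := fun i => by
      rw [norm_inv]
      exact inv_anti₀ hd (hdle i)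
    have hAB : diagOp b (fun i => mu - m i) hbA * diagOp b (fun i => (mu - m i)⁻¹) hbB = 1 := by
      rw [diagOp_mul b _ hbA hbB (fun i => (norm_mul_le _ _).trans
        (mul_le_mul (hbA i) (hbB i) (norm_nonneg _) ((norm_nonneg (mu - m i)).trans (hbA i))))]
      · rw [diagOp_congr b _ _ (fun _ => le_refl (‖(1:ℂ)‖)) (fun i => mul_inv_cancel₀ (hne i)),
          diagOp_one]
    have hBA : diagOp b (fun i => (mu - m i)⁻¹) hbB * diagOp b (fun i => mu - m i) hbA = 1 := by
      rw [diagOp_mul b _ hbB hbA (fun i => (norm_mul_le _ _).trans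
        (mul_le_mul (hbB i) (hbA i) (norm_nonneg _) ((norm_nonneg ((mu - m i)⁻¹)).trans (hbB i))))]
      · rw [diagOp_congr b _ _ (fun _ => le_refl (‖(1:ℂ)‖)) (fun i => inv_mul_cancel₀ (hne i)),
          diagOp_one]
    rw [algebraMap_sub_diagOp b m hm mu hbA]
    exact ⟨⟨_, _, hAB, hBA⟩, rfl⟩
  · -- closure ⊆ spectrum
    apply closure_minimal _ (spectrum.isClosed _)
    rintro _ ⟨i, rfl⟩
    rw [spectrum.mem_iff]
    intro hunit
    have hbA : ∀ i', ‖m i - m i'‖ ≤ ‖m i‖ + W :=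
      fun i' => le_trans (norm_sub_le _ _) (by have := hm i'; linarith)
    rw [algebraMap_sub_diagOp b m hm (m i) hbA] at hunit
    classical
    have hzero : diagOp b (fun i' => m i - m i') hbA (b i) = 0 := by
      rw [← b.repr.map_eq_zero_iff]
      apply lp.ext
      funext i'
      show b.repr (diagOp b (fun i' => m i - m i') hbA (b i)) i' = (0 : lp (fun _ : I => ℂ) 2) i'
      rw [diagOp_repr, b.repr_self, lp.coeFn_zero, Pi.zero_apply]
      by_cases h : i' = i
      · subst h; simp
      · rw [lp.single_apply]
        simp [h]
    obtain ⟨u, hu⟩ := hunit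
    have h1 : ‖b i‖ = 1 := b.orthonormal.1 i
    have : b i = 0 := by
      calc b i = (1 : H →L[ℂ] H) (b i) := rfl
        _ = ((↑u⁻¹ * ↑u : H →L[ℂ] H)) (b i) := by rw [u.inv_mul]
        _ = (↑u⁻¹ : H →L[ℂ] H) ((↑u : H →L[ℂ] H) (b i)) := rfl
        _ = (↑u⁻¹ : H →L[ℂ] H) 0 := by rw [hu, hzero]
        _ = 0 := map_zero _
    rw [this, norm_zero] at h1
    exact one_ne_zero h1.symm

end diag

section frame
variable {H I J : Type*} [NormedAddCommGroup H] [InnerProductSpace ℂ H] [CompleteSpace H]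
  (b : HilbertBasis I ℂ H) (p : J → I) (c : J → ℂ)
  (hfib : ∀ (i : I) (t : Finset J), (∀ j ∈ t, p j = i) → ∑ j ∈ t, ‖c j‖^2 ≤ 1)

include hfib in
theorem frame_finite_bound (x : J → ℂ) (t : Finset J) :
    ‖∑ j ∈ t, x j • (c j • b (p j))‖^2 ≤ ∑ j ∈ t, ‖x j‖^2 := by
  classical
  have hgroup : ∑ j ∈ t, x j • (c j • b (p j))
      = ∑ i ∈ t.image p, (∑ j ∈ t.filter (fun j => p j = i), x j * c j) • b i := by
    rw [← Finset.sum_fiberwise_of_maps_to (fun j hj => Finset.mem_image_of_mem p hj)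
      (fun j => x j • (c j • b (p j)))]
    refine Finset.sum_congr rfl fun i _ => ?_
    rw [Finset.sum_smul]
    refine Finset.sum_congr rfl fun j hj => ?_
    rw [Finset.mem_filter] at hj
    rw [hj.2, smul_smul]
  rw [hgroup]
  have hnorm : ‖∑ i ∈ t.image p, (∑ j ∈ t.filter (fun j => p j = i), x j * c j) • b i‖^2
      = ∑ i ∈ t.image p, ‖∑ j ∈ t.filter (fun j => p j = i), x j * c j‖^2 := by
    have h := b.orthonormal.inner_sum (fun i => ∑ j ∈ t.filter (fun j => p j = i), x j * c j)
      (fun i => ∑ j ∈ t.filter (fun j => p j = i), x j * c j) (t.image p)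
    rw [← @inner_self_eq_norm_sq ℂ, h, map_sum]
    refine Finset.sum_congr rfl fun i _ => ?_
    rw [RCLike.conj_mul]
    norm_cast
  rw [hnorm]
  calc ∑ i ∈ t.image p, ‖∑ j ∈ t.filter (fun j => p j = i), x j * c j‖^2
      ≤ ∑ i ∈ t.image p, ∑ j ∈ t.filter (fun j => p j = i), ‖x j‖^2 := by
        refine Finset.sum_le_sum fun i _ => ?_
        have h1 : ‖∑ j ∈ t.filter (fun j => p j = i), x j * c j‖
            ≤ ∑ j ∈ t.filter (fun j => p j = i), ‖x j‖ * ‖c j‖ := by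
          refine (norm_sum_le _ _).trans ?_
          exact Finset.sum_le_sum fun j _ => le_of_eq (norm_mul _ _)
        have h2 : (∑ j ∈ t.filter (fun j => p j = i), ‖x j‖ * ‖c j‖)^2
            ≤ (∑ j ∈ t.filter (fun j => p j = i), ‖x j‖^2)
              * (∑ j ∈ t.filter (fun j => p j = i), ‖c j‖^2) :=
          Finset.sum_mul_sq_le_sq_mul_sq _ _ _
        have h3 : ∑ j ∈ t.filter (fun j => p j = i), ‖c j‖^2 ≤ 1 :=
          hfib i _ fun j hj => (Finset.mem_filter.mp hj).2
        have h4 : (0:ℝ) ≤ ∑ j ∈ t.filter (fun j => p j = i), ‖x j‖^2 :=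
          Finset.sum_nonneg fun j _ => sq_nonneg _
        nlinarith [norm_nonneg (∑ j ∈ t.filter (fun j => p j = i), x j * c j),
          Finset.sum_nonneg (fun j (_ : j ∈ t.filter (fun j => p j = i)) =>
            mul_nonneg (norm_nonneg (x j)) (norm_nonneg (c j)))]
    _ = ∑ j ∈ t, ‖x j‖^2 :=
        Finset.sum_fiberwise_of_maps_to (fun j hj => Finset.mem_image_of_mem p hj) _

include hfib in
theorem frame_summable {x : J → ℂ} (hx : Summable fun j => ‖x j‖^2) :
    Summable fun j => x j • (c j • b (p j)) := by
  rw [summable_iff_vanishing_norm]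
  intro ε hε
  obtain ⟨s, hs⟩ := summable_iff_vanishing_norm.mp hx (ε^2) (by positivity)
  refine ⟨s, fun t ht => ?_⟩
  have h1 := frame_finite_bound b p c hfib x t
  have h2 := hs t ht
  have h3 : ∑ j ∈ t, ‖x j‖^2 ≤ ‖∑ j ∈ t, ‖x j‖^2‖ := le_abs_self _
  nlinarith [norm_nonneg (∑ j ∈ t, x j • (c j • b (p j)))]

end frame

/-- For the commutative-type Parseval frame `e j = c j • b (p j)` and a
uniformly bounded family of reals `E`: the family `(E j ⟨f, e j⟩ e j)_j` is summable for every
`f`, the series `λ i = ∑_{j ∈ p⁻¹ i} E j |c j|²` converges absolutely, and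
`T f = ∑_j E j ⟨f, e j⟩ e j = ∑_i λ i ⟨f, b i⟩ b i` defines a bounded self-adjoint operator
whose spectrum is the closure of `{λ i}`. -/
theorem stmt_4 {H I J : Type*} [NormedAddCommGroup H] [InnerProductSpace ℂ H] [CompleteSpace H]
    [Countable J] (b : HilbertBasis I ℂ H) (p : J → I) (hp : Function.Surjective p)
    (c : J → ℂ) (hc : ∀ j, c j ≠ 0)
    (hone : ∀ i : I, HasSum (fun j : {j : J // p j = i} => ‖c j.1‖ ^ 2) 1)
    (e : J → H) (he : ∀ j, e j = c j • b (p j))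
    (E : J → ℝ) (hE : ∃ C : ℝ, ∀ j, |E j| ≤ C)
    (lam : I → ℝ) (hlam : ∀ i : I, lam i = ∑' j : {j : J // p j = i}, E j.1 * ‖c j.1‖ ^ 2) :
    (∀ f : H, Summable fun j => E j • (⟪e j, f⟫_ℂ • e j)) ∧
      (∀ i : I, Summable fun j : {j : J // p j = i} => |E j.1| * ‖c j.1‖ ^ 2) ∧
      ∃ T : H →L[ℂ] H,
        (∀ f : H, T f = ∑' j, E j • (⟪e j, f⟫_ℂ • e j)) ∧
        (∀ f : H, T f = ∑' i : I, lam i • (⟪b i, f⟫_ℂ • b i)) ∧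
        IsSelfAdjoint T ∧
        spectrum ℂ T = closure (Set.range fun i => (lam i : ℂ)) := by
  classical
  obtain ⟨C, hC⟩ := hE
  set W : ℝ := max C 0 with hWdef
  have hW0 : 0 ≤ W := le_max_right _ _
  have hEW : ∀ j, |E j| ≤ W := fun j => (hC j).trans (le_max_left _ _)
  -- finite fiber bound
  have hfib : ∀ (i : I) (t : Finset J), (∀ j ∈ t, p j = i) → ∑ j ∈ t, ‖c j‖^2 ≤ 1 := by
    intro i t ht
    rw [← Finset.sum_subtype_of_mem (fun j => ‖c j‖^2) ht]
    exact sum_le_hasSum _ (fun j _ => sq_nonneg _) (hone i)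
  -- fiberwise summability of E * ‖c‖²
  have hEc : ∀ i, Summable fun j : {j : J // p j = i} => E j.1 * ‖c j.1‖ ^ 2 := by
    intro i
    refine Summable.of_norm_bounded (((hone i).summable).mul_left W) fun j => ?_
    rw [Real.norm_eq_abs, abs_mul, abs_of_nonneg (sq_nonneg ‖c j.1‖)]
    exact mul_le_mul_of_nonneg_right (hEW j.1) (sq_nonneg _)
  have hlamsum : ∀ i, HasSum (fun j : {j : J // p j = i} => E j.1 * ‖c j.1‖ ^ 2) (lam i) := by
    intro i
    rw [hlam i]
    exact (hEc i).hasSum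
  -- |lam i| ≤ W
  have hlamW : ∀ i, ‖((lam i : ℂ))‖ ≤ W := by
    intro i
    have hWsum : HasSum (fun j : {j : J // p j = i} => W * ‖c j.1‖ ^ 2) W := by
      simpa using (hone i).mul_left W
    have h1 : lam i ≤ W :=
      hasSum_le (fun j => by
        have := (le_abs_self (E j.1)).trans (hEW j.1)
        exact mul_le_mul_of_nonneg_right this (sq_nonneg _)) (hlamsum i) hWsum
    have hWsum' : HasSum (fun j : {j : J // p j = i} => -W * ‖c j.1‖ ^ 2) (-W) := by
      simpa using (hone i).mul_left (-W)
    have h2 : -W ≤ lam i :=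
      hasSum_le (fun j => by
        have := (neg_abs_le (E j.1)).trans' (neg_le_neg (hEW j.1))
        exact mul_le_mul_of_nonneg_right this (sq_nonneg _)) hWsum' (hlamsum i)
    rw [Complex.norm_real, Real.norm_eq_abs]
    exact abs_le.mpr ⟨h2, h1⟩
  set T : H →L[ℂ] H := diagOp b (fun i => (lam i : ℂ)) hlamW with hT
  -- summability facts for coefficients
  have hrepr2 : ∀ f : H, Summable fun i => ‖b.repr f i‖ ^ 2 := by
    intro f
    have := (lp.memℓp (b.repr f)).summable (p := 2) (by norm_num)
    have h2 : (2 : ℝ≥0∞).toReal = 2 := by norm_num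
    rw [h2] at this
    refine this.congr fun i => ?_
    rw [← Real.rpow_natCast ‖b.repr f i‖ 2]
    norm_num
  -- coefficient function
  have hterm : ∀ (f : H) (j : J),
      E j • (⟪e j, f⟫_ℂ • e j) = (((E j : ℂ)) * ⟪e j, f⟫_ℂ) • (c j • b (p j)) := by
    intro f j
    rw [he j, ← Complex.coe_smul, smul_smul]
  have hkey : ∀ f : H, ∀ i, HasSum
      (fun j : {j : J // p j = i} => ‖c j.1‖^2 * ‖b.repr f (p j.1)‖^2) (‖b.repr f i‖^2) := by
    intro f i
    have h0 : HasSum (fun j : {j : J // p j = i} => ‖c j.1‖^2 * ‖b.repr f i‖^2)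
        (1 * ‖b.repr f i‖^2) := (hone i).mul_right _
    rw [one_mul] at h0
    have hfn : (fun j : {j : J // p j = i} => ‖c j.1‖^2 * ‖b.repr f (p j.1)‖^2)
        = fun j => ‖c j.1‖^2 * ‖b.repr f i‖^2 := funext fun j => by rw [j.2]
    rw [hfn]
    exact h0
  have hbase : ∀ f : H, Summable fun j : J => ‖c j‖^2 * ‖b.repr f (p j)‖^2 := by
    intro f
    rw [← (Equiv.sigmaFiberEquiv p).summable_iff]
    exact (summable_sigma_of_nonneg fun q => mul_nonneg (sq_nonneg _) (sq_nonneg _)).mpr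
      ⟨fun i => (hkey f i).summable,
        (hrepr2 f).congr fun i => ((hkey f i).tsum_eq).symm⟩
  have hinner : ∀ (f : H) (j : J), ⟪e j, f⟫_ℂ = (starRingEnd ℂ) (c j) * b.repr f (p j) := by
    intro f j
    rw [he j, inner_smul_left, b.repr_apply_apply]
  have hxsum : ∀ f : H, Summable fun j => ‖((E j : ℂ)) * ⟪e j, f⟫_ℂ‖ ^ 2 := by
    intro f
    refine Summable.of_nonneg_of_le (fun j => sq_nonneg _) (fun j => ?_)
      ((hbase f).mul_left (W^2))
    have h5 : ‖((E j : ℂ)) * ⟪e j, f⟫_ℂ‖ = |E j| * (‖c j‖ * ‖b.repr f (p j)‖) := by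
      rw [hinner f j, norm_mul, norm_mul, RCLike.norm_conj, Complex.norm_real, Real.norm_eq_abs]
    rw [h5]
    have h6 : |E j|^2 ≤ W^2 := pow_le_pow_left₀ (abs_nonneg _) (hEW j) 2
    calc (|E j| * (‖c j‖ * ‖b.repr f (p j)‖))^2
        = |E j|^2 * (‖c j‖^2 * ‖b.repr f (p j)‖^2) := by ring
      _ ≤ W^2 * (‖c j‖^2 * ‖b.repr f (p j)‖^2) :=
          mul_le_mul_of_nonneg_right h6 (by positivity)
  -- summability over J (bullet 1)
  have bullet1 : ∀ f : H, Summable fun j => E j • (⟪e j, f⟫_ℂ • e j) := by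
    intro f
    have := frame_summable b p c hfib (hxsum f)
    refine this.congr fun j => ?_
    rw [hterm f j]
  refine ⟨bullet1, fun i => ?_, T, ?_, ?_, ?_, ?_⟩
  · -- bullet 2
    refine Summable.of_nonneg_of_le (fun j => mul_nonneg (abs_nonneg _) (sq_nonneg _))
      (fun j => mul_le_mul_of_nonneg_right (hEW j.1) (sq_nonneg _))
      ((hone i).summable.mul_left W)
  · -- T f = ∑' j
    intro f
    have hsum : HasSum (fun j => E j • (⟪e j, f⟫_ℂ • e j)) (∑' j, E j • (⟪e j, f⟫_ℂ • e j)) :=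
      (bullet1 f).hasSum
    -- transport to sigma type and sum fiberwise
    set F : J → H := fun j => E j • (⟪e j, f⟫_ℂ • e j) with hF
    set S := ∑' j, F j with hS
    have hSig : HasSum (F ∘ (Equiv.sigmaFiberEquiv p)) S :=
      ((Equiv.sigmaFiberEquiv p).hasSum_iff).mpr hsum
    have hfiber : ∀ i, HasSum (fun j : {j : J // p j = i} => F j.1)
        (((lam i : ℂ) * b.repr f i) • b i) := by
      intro i
      have hscal : HasSum (fun j : {j : J // p j = i} =>
          ((E j.1 * ‖c j.1‖^2 : ℝ) : ℂ) * b.repr f i) (((lam i : ℝ) : ℂ) * b.repr f i) := by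
        have := ((hlamsum i).mapL Complex.ofRealCLM).mul_right (b.repr f i)
        simpa using this
      have heq : (fun j : {j : J // p j = i} => F j.1)
          = fun j : {j : J // p j = i} =>
            (((E j.1 * ‖c j.1‖^2 : ℝ) : ℂ) * b.repr f i) • b i := by
        funext j
        rw [hF]
        show E j.1 • (⟪e j.1, f⟫_ℂ • e j.1) = _
        rw [hterm f j.1, hinner f j.1, smul_smul, j.2]
        congr 1
        have h : (starRingEnd ℂ) (c j.1) * (c j.1) = ((‖c j.1‖^2 : ℝ) : ℂ) := by
          rw [RCLike.conj_mul]; norm_cast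
        have h2 : ((‖c j.1‖^2:ℝ):ℂ) = (starRingEnd ℂ) (c j.1) * c j.1 := h.symm
        push_cast at h2 ⊢
        rw [h2]
        ring
      rw [heq]
      exact hscal.smul_const (b i)
    have hcollapse : HasSum (fun i => ((lam i : ℂ) * b.repr f i) • b i) S :=
      HasSum.sigma hSig hfiber
    exact (diagOp_hasSum b _ hlamW f).unique hcollapse
  · -- T f = ∑' i
    intro f
    have h1 : HasSum (fun i => ((lam i : ℂ) * b.repr f i) • b i) (T f) :=
      diagOp_hasSum b _ hlamW f
    have h2 : (fun i => ((lam i : ℂ) * b.repr f i) • b i)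
        = fun i => lam i • (⟪b i, f⟫_ℂ • b i) := by
      funext i
      rw [← b.repr_apply_apply, ← Complex.coe_smul, smul_smul]
    rw [h2] at h1
    exact h1.tsum_eq.symm
  · -- self-adjoint
    exact diagOp_selfAdjoint b _ hlamW fun i => Complex.conj_ofReal _
  · -- spectrum
    exact diagOp_spectrum b _ hlamW
end

section
/- Let (e_j)_{j∈J} (J countable) be a Parseval frame in a complex Hilbert space H and let (E_j)_{j∈J} be real numbers. Define the operator H_{E,e} on the domain D = { f ∈ H : ∑_j E_j² |⟨f, e_j⟩|² < ∞ } by H_{E,e} f = ∑_j E_j ⟨f, e_j⟩ e_j (which converges since (E_j⟨f,e_j⟩)_j ∈ ℓ²(J)). On ℓ²(J) define the Gram operator G by (Gc)_j = ∑_k c_k ⟨e_k, e_j⟩, and define the operator B on the domain D_B = { c ∈ ℓ²(J) : (E_j (Gc)_j)_j ∈ ℓ²(J) } by B c = G((E_j (Gc)_j)_j). Then for every complex λ ≠ 0: λ is an eigenvalue of H_{E,e} (i.e., there exists f ∈ D, f ≠ 0, with H_{E,e} f = λ f) if and only if λ is an eigenvalue of B (i.e., there exists c ∈ D_B, c ≠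 0, with B c = λ c). -/
open scoped InnerProductSpace
open scoped ComplexConjugate

section Stmt5Aux

variable {H J : Type*} [NormedAddCommGroup H] [InnerProductSpace ℂ H] [CompleteSpace H]
  [Countable J] {e : J → H}

lemma stmt5_polC (a b : ℂ) : (starRingEnd ℂ) a * b =
    (((‖a + b‖ ^ 2 : ℝ) : ℂ) - ((‖a - b‖ ^ 2 : ℝ) : ℂ) +
      ((((‖a - Complex.I * b‖ ^ 2 : ℝ)) : ℂ) - ((‖a + Complex.I * b‖ ^ 2 : ℝ) : ℂ))
        * Complex.I) / 4 := by
  push_cast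
  simp only [← Complex.mul_conj', map_add, map_sub, map_mul, Complex.conj_I]
  linear_combination (-(a * (starRingEnd ℂ) b - (starRingEnd ℂ) a * b)/2) * Complex.I_mul_I

lemma stmt5_key (hPF : ∀ f : H, HasSum (fun j => ‖⟪e j, f⟫_ℂ‖ ^ 2) (‖f‖ ^ 2)) (g f : H) :
    HasSum (fun j => (starRingEnd ℂ) ⟪e j, g⟫_ℂ * ⟪e j, f⟫_ℂ) ⟪g, f⟫_ℂ := by
  have H4 : ∀ u : H, HasSum (fun j => ((‖⟪e j, u⟫_ℂ‖ ^ 2 : ℝ) : ℂ)) ((‖u‖ ^ 2 : ℝ) : ℂ) :=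
    fun u => (hPF u).mapL Complex.ofRealCLM
  have hh := (((H4 (g + f)).sub (H4 (g - f))).add
    (((H4 (g - Complex.I • f)).sub (H4 (g + Complex.I • f))).mul_right Complex.I)).div_const 4
  have hfun : (fun j => (starRingEnd ℂ) ⟪e j, g⟫_ℂ * ⟪e j, f⟫_ℂ) = fun j =>
      (((‖⟪e j, g + f⟫_ℂ‖ ^ 2 : ℝ) : ℂ) - ((‖⟪e j, g - f⟫_ℂ‖ ^ 2 : ℝ) : ℂ) +
        (((‖⟪e j, g - Complex.I • f⟫_ℂ‖ ^ 2 : ℝ) : ℂ)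
          - ((‖⟪e j, g + Complex.I • f⟫_ℂ‖ ^ 2 : ℝ) : ℂ)) * Complex.I) / 4 := by
    funext j
    rw [stmt5_polC]
    simp only [← inner_smul_right, ← inner_sub_right, ← inner_add_right]
  rw [hfun]
  have hval : ⟪g, f⟫_ℂ = (((‖g + f‖ ^ 2 : ℝ) : ℂ) - ((‖g - f‖ ^ 2 : ℝ) : ℂ) +
      ((((‖g - Complex.I • f‖ ^ 2 : ℝ)) : ℂ) - ((‖g + Complex.I • f‖ ^ 2 : ℝ) : ℂ))
        * Complex.I) / 4 := by
    rw [inner_eq_sum_norm_sq_div_four (𝕜 := ℂ) g f]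
    simp only [RCLike.I_to_complex, show ((RCLike.ofReal : ℝ → ℂ)) = Complex.ofReal from rfl]
    push_cast
    ring
  rw [hval]
  exact hh

lemma stmt5_norm_sum_le (hPF : ∀ f : H, HasSum (fun j => ‖⟪e j, f⟫_ℂ‖ ^ 2) (‖f‖ ^ 2))
    (c : J → ℂ) (t : Finset J) :
    ‖∑ j ∈ t, c j • e j‖ ≤ Real.sqrt (∑ j ∈ t, ‖c j‖ ^ 2) := by
  set v := ∑ j ∈ t, c j • e j with hv
  have e1 : ⟪v, v⟫_ℂ = ∑ j ∈ t, (starRingEnd ℂ) (c j) * ⟪e j, v⟫_ℂ := by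
    rw [hv]
    rw [sum_inner]
    exact Finset.sum_congr rfl fun j _ => inner_smul_left _ _ _
  have e2 : ‖v‖ ^ 2 = ‖⟪v, v⟫_ℂ‖ := by
    rw [inner_self_eq_norm_sq_to_K (𝕜 := ℂ)]
    simp
  have e3 : ‖v‖ ^ 2 ≤ Real.sqrt (∑ j ∈ t, ‖c j‖ ^ 2) * ‖v‖ := by
    calc ‖v‖ ^ 2 = ‖⟪v, v⟫_ℂ‖ := e2
    _ ≤ ∑ j ∈ t, ‖c j‖ * ‖⟪e j, v⟫_ℂ‖ := by
        rw [e1]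
        refine (norm_sum_le _ _).trans (le_of_eq (Finset.sum_congr rfl fun j _ => ?_))
        rw [norm_mul, RCLike.norm_conj]
    _ ≤ Real.sqrt (∑ j ∈ t, ‖c j‖ ^ 2) * Real.sqrt (∑ j ∈ t, ‖⟪e j, v⟫_ℂ‖ ^ 2) := by
        refine le_trans (le_of_eq (Finset.sum_congr rfl fun j _ => ?_))
          (Real.sum_sqrt_mul_sqrt_le t (fun j => sq_nonneg (‖c j‖))
            (fun j => sq_nonneg (‖⟪e j, v⟫_ℂ‖)))
        rw [Real.sqrt_sq (norm_nonneg _), Real.sqrt_sq (norm_nonneg _)]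
    _ ≤ Real.sqrt (∑ j ∈ t, ‖c j‖ ^ 2) * ‖v‖ := by
        refine mul_le_mul_of_nonneg_left ?_ (Real.sqrt_nonneg _)
        have h1 : ∑ j ∈ t, ‖⟪e j, v⟫_ℂ‖ ^ 2 ≤ ‖v‖ ^ 2 :=
          sum_le_hasSum t (fun j _ => sq_nonneg _) (hPF v)
        calc Real.sqrt (∑ j ∈ t, ‖⟪e j, v⟫_ℂ‖ ^ 2) ≤ Real.sqrt (‖v‖ ^ 2) :=
              Real.sqrt_le_sqrt h1
        _ = ‖v‖ := Real.sqrt_sq (norm_nonneg _)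
  rcases eq_or_lt_of_le (norm_nonneg v) with h0 | h0
  · rw [← h0]; positivity
  · nlinarith [e3]

lemma stmt5_synth_summable (hPF : ∀ f : H, HasSum (fun j => ‖⟪e j, f⟫_ℂ‖ ^ 2) (‖f‖ ^ 2))
    {c : J → ℂ} (hc : Summable fun j => ‖c j‖ ^ 2) :
    Summable fun j => c j • e j := by
  rw [summable_iff_vanishing_norm]
  intro ε hε
  obtain ⟨s, hs⟩ := summable_iff_vanishing_norm.1 hc (ε ^ 2) (by positivity)
  refine ⟨s, fun t ht => ?_⟩
  calc ‖∑ j ∈ t, c j • e j‖ ≤ Real.sqrt (∑ j ∈ t, ‖c j‖ ^ 2) := stmt5_norm_sum_le hPF c t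
  _ < ε := by
      have h2 := hs t ht
      rw [Real.norm_eq_abs] at h2
      have h3 : ∑ j ∈ t, ‖c j‖ ^ 2 < ε ^ 2 := lt_of_le_of_lt (le_abs_self _) h2
      calc Real.sqrt (∑ j ∈ t, ‖c j‖ ^ 2) < Real.sqrt (ε ^ 2) :=
            Real.sqrt_lt_sqrt (by positivity) h3
      _ = ε := Real.sqrt_sq hε.le

lemma stmt5_inner_tsum {c : J → ℂ} (hc : Summable fun j => c j • e j) (x : H) :
    ⟪x, ∑' j, c j • e j⟫_ℂ = ∑' j, c j * ⟪x, e j⟫_ℂ := by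
  have h := hc.hasSum.mapL (innerSL ℂ x)
  have h2 : HasSum (fun j => c j * ⟪x, e j⟫_ℂ) ⟪x, ∑' j, c j • e j⟫_ℂ := by
    refine h.congr_fun fun j => ?_
    simp [inner_smul_right]
  exact h2.tsum_eq.symm

lemma stmt5_recon (hPF : ∀ f : H, HasSum (fun j => ‖⟪e j, f⟫_ℂ‖ ^ 2) (‖f‖ ^ 2)) (f : H) :
    HasSum (fun j => ⟪e j, f⟫_ℂ • e j) f := by
  have hsum : Summable fun j => ⟪e j, f⟫_ℂ • e j :=
    stmt5_synth_summable hPF (hPF f).summable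
  have hu := hsum.hasSum
  suffices h : (∑' j, ⟪e j, f⟫_ℂ • e j) = f by rwa [h] at hu
  refine ext_inner_left ℂ fun x => ?_
  rw [stmt5_inner_tsum hsum x, ← (stmt5_key hPF x f).tsum_eq]
  refine tsum_congr fun j => ?_
  rw [mul_comm, inner_conj_symm]

end Stmt5Aux

/-- For a Parseval frame `e` and reals `E`, a nonzero `λ ∈ ℂ` is an eigenvalue
of `H_{E,e} f = ∑_j E j ⟨f, e j⟩ e j` (domain: `(E j ⟨f, e j⟩)_j ∈ ℓ²`) iff it is an eigenvalue
of `B = G ∘ (E ·) ∘ G` on `ℓ²(J)`, where `G` is the Gram operator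
`(G c)_j = ∑_k ⟨e k, e j⟩ c k`. -/
theorem stmt_5 {H J : Type*} [NormedAddCommGroup H] [InnerProductSpace ℂ H] [CompleteSpace H]
    [Countable J] (e : J → H)
    (hPF : ∀ f : H, HasSum (fun j => ‖⟪e j, f⟫_ℂ‖ ^ 2) (‖f‖ ^ 2))
    (E : J → ℝ) (lam : ℂ) (hlam : lam ≠ 0) :
    (∃ f : H, f ≠ 0 ∧ (Summable fun j => (E j) ^ 2 * ‖⟪e j, f⟫_ℂ‖ ^ 2) ∧
        (∑' j, E j • (⟪e j, f⟫_ℂ • e j)) = lam • f) ↔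
      (∃ c : J → ℂ, c ≠ 0 ∧ (Summable fun j => ‖c j‖ ^ 2) ∧
        (Summable fun j => ‖(E j : ℂ) * ∑' k, ⟪e j, e k⟫_ℂ * c k‖ ^ 2) ∧
        ∀ j : J,
          (∑' k, ⟪e j, e k⟫_ℂ * ((E k : ℂ) * ∑' l, ⟪e k, e l⟫_ℂ * c l)) = lam * c j) := by
  have hsmul : ∀ (r : ℝ) (a : ℂ) (x : H), r • (a • x) = ((r : ℂ) * a) • x := by
    intro r a x
    rw [← algebraMap_smul ℂ r (a • x), smul_smul]
    norm_num
  have hnorm : ∀ (r : ℝ) (a : ℂ), ‖(r : ℂ) * a‖ ^ 2 = r ^ 2 * ‖a‖ ^ 2 := by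
    intro r a
    rw [norm_mul, mul_pow, Complex.norm_real, Real.norm_eq_abs, sq_abs]
  constructor
  · rintro ⟨f, hf0, hfS, hfe⟩
    set c : J → ℂ := fun j => ⟪e j, f⟫_ℂ with hc
    have hrecon := stmt5_recon hPF f
    have hGc : ∀ j, (∑' k, ⟪e j, e k⟫_ℂ * c k) = c j := by
      intro j
      have h1 : (∑' k, ⟪e j, e k⟫_ℂ * c k) = ∑' k, c k * ⟪e j, e k⟫_ℂ :=
        tsum_congr fun k => mul_comm _ _
      rw [h1, ← stmt5_inner_tsum hrecon.summable (e j), hrecon.tsum_eq]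
    have hd2 : Summable fun j => ‖(E j : ℂ) * c j‖ ^ 2 :=
      hfS.congr fun j => (hnorm _ _).symm
    have hdsum : Summable fun k => ((E k : ℂ) * c k) • e k := stmt5_synth_summable hPF hd2
    have hHf : (∑' k, ((E k : ℂ) * c k) • e k) = lam • f := by
      rw [← hfe]
      exact tsum_congr fun k => (hsmul (E k) (c k) (e k)).symm
    refine ⟨c, ?_, (hPF f).summable, ?_, ?_⟩
    · intro h0
      apply hf0
      have hz : ∀ j, ⟪e j, f⟫_ℂ = 0 := fun j => congrFun h0 j
      have h2 := hPF f
      simp only [hz, norm_zero] at h2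
      have h1 : ‖f‖ ^ 2 = 0 := h2.unique (by simpa using hasSum_zero)
      simpa using h1
    · refine hd2.congr fun j => ?_
      rw [hGc j]
    · intro j
      calc (∑' k, ⟪e j, e k⟫_ℂ * ((E k : ℂ) * ∑' l, ⟪e k, e l⟫_ℂ * c l))
          = ∑' k, ((E k : ℂ) * c k) * ⟪e j, e k⟫_ℂ :=
            tsum_congr fun k => by rw [hGc k]; ring
        _ = ⟪e j, ∑' k, ((E k : ℂ) * c k) • e k⟫_ℂ := (stmt5_inner_tsum hdsum (e j)).symm
        _ = lam * c j := by rw [hHf, inner_smul_right]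
  · rintro ⟨c, hc0, hc2, hd2, heq⟩
    have hcs : Summable fun k => c k • e k := stmt5_synth_summable hPF hc2
    set g : H := ∑' k, c k • e k with hg
    have hGc : ∀ j, (∑' l, ⟪e j, e l⟫_ℂ * c l) = ⟪e j, g⟫_ℂ := by
      intro j
      rw [hg, stmt5_inner_tsum hcs (e j)]
      exact tsum_congr fun l => mul_comm _ _
    set d : J → ℂ := fun k => (E k : ℂ) * ⟪e k, g⟫_ℂ with hd
    have hd2' : Summable fun j => ‖d j‖ ^ 2 := by
      refine hd2.congr fun j => ?_
      rw [hGc j]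
    have hds : Summable fun k => d k • e k := stmt5_synth_summable hPF hd2'
    set h : H := ∑' k, d k • e k with hh
    have hinner_h : ∀ j, ⟪e j, h⟫_ℂ = lam * c j := by
      intro j
      rw [hh, stmt5_inner_tsum hds (e j), ← heq j]
      refine tsum_congr fun k => ?_
      rw [hGc k]
      simp only [hd]
      ring
    have hgh : g = lam⁻¹ • h := by
      have hr := stmt5_recon hPF h
      have h2 : HasSum (fun k => c k • e k) (lam⁻¹ • h) := by
        have h3 := hr.const_smul lam⁻¹
        refine h3.congr_fun fun k => ?_
        rw [smul_smul, hinner_h k, inv_mul_cancel_left₀ hlam]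
      rw [hg]
      exact h2.tsum_eq
    have hcg : ∀ j, ⟪e j, g⟫_ℂ = c j := by
      intro j
      rw [hgh, inner_smul_right, hinner_h j, inv_mul_cancel_left₀ hlam]
    refine ⟨g, ?_, ?_, ?_⟩
    · intro h0
      apply hc0
      funext j
      have h1 := hcg j
      rw [h0, inner_zero_right] at h1
      simpa using h1.symm
    · refine hd2'.congr fun j => ?_
      simp only [hd]
      rw [hcg j, hnorm]
    · calc (∑' j, E j • (⟪e j, g⟫_ℂ • e j)) = ∑' j, d j • e j := by
            refine tsum_congr fun j => ?_
            rw [hsmul]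
        _ = h := hh.symm
        _ = lam • g := by rw [hgh, smul_inv_smul₀ hlam]
end

section
/- Let H be a complex inner product space of finite dimension d, let e_1, …, e_N be a Parseval frame in H (∑_{j=1}^N |⟨f, e_j⟩|² = ‖f‖² for all f ∈ H), and let E_1, …, E_N be real numbers. Let G be the N×N Gram matrix with entries G_{jk} = ⟨e_k, e_j⟩ and let ℰ = diag(E_1, …, E_N). Then for every complex number λ ≠ 0, λ is an eigenvalue of the operator H_{E,e} = ∑_{j=1}^N E_j ⟨·, e_j⟩ e_j on H if and only if λ is an eigenvalue of the N×N matrix G ℰ G. -/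
open scoped InnerProductSpace

/-- For a finite Parseval frame `e₁,…,e_N` in a finite-dimensional complex
inner product space, reals `E₁,…,E_N`, Gram matrix `G` (`G j k = ⟨e k, e j⟩`) and
`ℰ = diag(E)`: a nonzero `λ ∈ ℂ` is an eigenvalue of `H_{E,e} = ∑_j E j ⟨·, e j⟩ e j`
iff it is an eigenvalue of the matrix `G ℰ G`. -/
theorem stmt_6 {H : Type*} [NormedAddCommGroup H] [InnerProductSpace ℂ H]
    [FiniteDimensional ℂ H] {N : ℕ} (e : Fin N → H)
    (hPF : ∀ f : H, ∑ j, ‖⟪e j, f⟫_ℂ‖ ^ 2 = ‖f‖ ^ 2)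
    (E : Fin N → ℝ) (lam : ℂ) (hlam : lam ≠ 0)
    (G Ecal : Matrix (Fin N) (Fin N) ℂ)
    (hG : ∀ j k, G j k = ⟪e j, e k⟫_ℂ)
    (hEcal : Ecal = Matrix.diagonal fun j => (E j : ℂ)) :
    (∃ f : H, f ≠ 0 ∧ (∑ j, E j • (⟪e j, f⟫_ℂ • e j)) = lam • f) ↔
      (∃ v : Fin N → ℂ, v ≠ 0 ∧ (G * Ecal * G).mulVec v = lam • v) := by
  -- reconstruction property of Parseval frames
  have recon : ∀ f : H, ∑ j, ⟪e j, f⟫_ℂ • e j = f := by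
    have key : (∑ j, ((innerSL ℂ (e j)).toLinearMap).smulRight (e j))
        = (LinearMap.id : H →ₗ[ℂ] H) := by
      rw [← ext_inner_map]
      intro f
      simp only [LinearMap.sum_apply, LinearMap.smulRight_apply, LinearMap.id_apply,
        ContinuousLinearMap.coe_coe, innerSL_apply_apply, sum_inner, inner_smul_left]
      have h1 : ∀ j : Fin N, (starRingEnd ℂ) ⟪e j, f⟫_ℂ * ⟪e j, f⟫_ℂ
          = (‖⟪e j, f⟫_ℂ‖ : ℂ) ^ 2 := fun j => by rw [Complex.conj_mul']
      simp only [h1, inner_self_eq_norm_sq_to_K]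
      norm_cast
      exact congrArg Complex.ofReal (hPF f)
    intro f
    have := congrFun (congrArg DFunLike.coe key) f
    simpa using this
  -- analysis of a synthesized vector is mulVec by G
  have hGmul : ∀ v : Fin N → ℂ, G.mulVec v = fun j => ⟪e j, ∑ k, v k • e k⟫_ℂ := by
    intro v; funext j
    simp only [Matrix.mulVec, dotProduct, hG, inner_sum, inner_smul_right]
    exact Finset.sum_congr rfl fun k _ => mul_comm _ _
  have hEmul : ∀ w : Fin N → ℂ, Ecal.mulVec w = fun j => (E j : ℂ) * w j := by
    intro w; funext j
    rw [hEcal, Matrix.mulVec_diagonal]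
  -- rewrite operator application
  have hop : ∀ (c : Fin N → ℂ), (∑ j, E j • ((c j) • e j)) = ∑ j, ((E j : ℂ) * c j) • e j := by
    intro c
    refine Finset.sum_congr rfl fun j _ => ?_
    rw [mul_smul, Complex.coe_smul]
  constructor
  · rintro ⟨f, hf0, heig⟩
    refine ⟨fun j => ⟪e j, f⟫_ℂ, ?_, ?_⟩
    · intro hv
      apply hf0
      have h2 : ‖f‖ ^ 2 = 0 := by
        rw [← hPF f]
        refine Finset.sum_eq_zero fun j _ => ?_
        have : ⟪e j, f⟫_ℂ = 0 := congrFun hv j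
        simp [this]
      simpa using pow_eq_zero_iff (n := 2) (by norm_num) |>.mp h2 |> norm_eq_zero.mp
    · have h1 : G.mulVec (fun j => ⟪e j, f⟫_ℂ) = fun j => ⟪e j, f⟫_ℂ := by
        rw [hGmul]; funext j; rw [recon f]
      rw [← Matrix.mulVec_mulVec, ← Matrix.mulVec_mulVec, h1, hEmul, hGmul]
      funext j
      have h2 : (∑ k, ((E k : ℂ) * ⟪e k, f⟫_ℂ) • e k) = lam • f := by
        rw [← hop]; exact heig
      rw [h2, inner_smul_right]
      simp
  · rintro ⟨v, hv0, hveig⟩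
    -- G is idempotent
    have hGG : G * G = G := by
      ext j k
      simp only [Matrix.mul_apply, hG]
      calc ∑ l, ⟪e j, e l⟫_ℂ * ⟪e l, e k⟫_ℂ
          = ⟪e j, ∑ l, ⟪e l, e k⟫_ℂ • e l⟫_ℂ := by
            rw [inner_sum]; exact Finset.sum_congr rfl fun l _ => by
              rw [inner_smul_right]; ring
        _ = ⟪e j, e k⟫_ℂ := by rw [recon]
    have hGv : G.mulVec v = v := by
      have h1 : G.mulVec ((G * Ecal * G).mulVec v) = (G * Ecal * G).mulVec v := by
        rw [Matrix.mulVec_mulVec, ← Matrix.mul_assoc, ← Matrix.mul_assoc, hGG]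
      rw [hveig] at h1
      have h2 : lam • G.mulVec v = lam • v := by
        rw [Matrix.mulVec_smul] at h1; exact h1
      exact smul_right_injective _ hlam h2
    -- the candidate eigenvector
    set f : H := ∑ k, ((E k : ℂ) * v k) • e k with hf
    have hAf : ∀ j, ⟪e j, f⟫_ℂ = lam * v j := by
      have h1 : G.mulVec (fun k => (E k : ℂ) * v k) = lam • v := by
        have : (fun k => (E k : ℂ) * v k) = Ecal.mulVec (G.mulVec v) := by
          rw [hGv, hEmul]
        rw [this, Matrix.mulVec_mulVec, Matrix.mulVec_mulVec]
        exact hveig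
      intro j
      have h2 := congrFun ((hGmul _).symm.trans h1) j
      simpa [hf] using h2
    refine ⟨f, ?_, ?_⟩
    · intro hf0
      apply hv0
      funext j
      have := hAf j
      rw [hf0, inner_zero_right] at this
      have : lam * v j = 0 := this.symm
      simpa [hlam] using mul_eq_zero.mp this
    · rw [hop]
      have h3 : lam • f = ∑ k, (lam * ((E k : ℂ) * v k)) • e k := by
        rw [hf, Finset.smul_sum]
        exact Finset.sum_congr rfl fun k _ => smul_smul _ _ _
      rw [h3]
      refine Finset.sum_congr rfl fun j _ => ?_
      rw [hAf j]
      ring_nf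
end

section
/- Let H be a complex inner product space of finite dimension d, let e_1, …, e_N be a Parseval frame in H, and let E_1, …, E_N be real numbers. Let G be the N×N Gram matrix with entries G_{jk} = ⟨e_k, e_j⟩ and ℰ = diag(E_1, …, E_N). Then 0 is an eigenvalue of the operator H_{E,e} = ∑_{j=1}^N E_j ⟨·, e_j⟩ e_j on H if and only if the dimension of the kernel of the matrix G ℰ G is strictly greater than N − d. -/
open scoped InnerProductSpace

/-- For a finite Parseval frame `e₁,…,e_N` in a `d`-dimensional complex inner
product space, Gram matrix `G` and `ℰ = diag(E)`: `0` is an eigenvalue of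
`H_{E,e} = ∑_j E j ⟨·, e j⟩ e j` iff the kernel of the matrix `G ℰ G` has dimension
strictly greater than `N − d`. -/
theorem stmt_7 {H : Type*} [NormedAddCommGroup H] [InnerProductSpace ℂ H]
    [FiniteDimensional ℂ H] {N d : ℕ} (hd : Module.finrank ℂ H = d)
    (e : Fin N → H)
    (hPF : ∀ f : H, ∑ j, ‖⟪e j, f⟫_ℂ‖ ^ 2 = ‖f‖ ^ 2)
    (E : Fin N → ℝ)
    (G Ecal : Matrix (Fin N) (Fin N) ℂ)
    (hG : ∀ j k, G j k = ⟪e j, e k⟫_ℂ)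
    (hEcal : Ecal = Matrix.diagonal fun j => (E j : ℂ)) :
    (∃ f : H, f ≠ 0 ∧ (∑ j, E j • (⟪e j, f⟫_ℂ • e j)) = 0) ↔
      N - d < Module.finrank ℂ (LinearMap.ker (Matrix.toLin' (G * Ecal * G))) := by
  classical
  -- analysis operator
  set T : H →ₗ[ℂ] (Fin N → ℂ) := LinearMap.pi (fun j => innerₛₗ ℂ (e j)) with hT
  -- synthesis operator
  set S : (Fin N → ℂ) →ₗ[ℂ] H :=
    { toFun := fun c => ∑ j, c j • e j
      map_add' := by intro x y; simp [add_smul, Finset.sum_add_distrib]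
      map_smul' := by intro r x; simp [smul_smul, Finset.smul_sum] } with hS
  have hTf : ∀ (f : H) j, T f j = ⟪e j, f⟫_ℂ := fun f j => rfl
  have hSc : ∀ c : Fin N → ℂ, S c = ∑ j, c j • e j := fun c => rfl
  have hST : ∀ f, S (T f) = f := by
    have key : (S ∘ₗ T - LinearMap.id : H →ₗ[ℂ] H) = 0 := by
      rw [← inner_map_self_eq_zero]
      intro x
      have : ⟪S (T x), x⟫_ℂ = ((‖x‖ : ℝ) ^ 2 : ℂ) := by
        rw [hSc]
        rw [sum_inner]
        have : ∀ j, ⟪T x j • e j, x⟫_ℂ = ((‖⟪e j, x⟫_ℂ‖ ^ 2 : ℝ) : ℂ) := by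
          intro j
          rw [inner_smul_left, hTf, ← inner_conj_symm (e j) x, mul_comm,
            Complex.mul_conj]
          simp [Complex.normSq_eq_norm_sq]
        simp_rw [this, ← Complex.ofReal_sum, hPF]
        push_cast
        ring
      simp [inner_sub_left, this, inner_self_eq_norm_sq_to_K]
    intro f
    have := congrFun (congrArg DFunLike.coe key) f
    simpa [sub_eq_zero] using this
  have hTinj : Function.Injective T :=
    Function.LeftInverse.injective hST
  have hSsurj : Function.Surjective S := fun f => ⟨T f, hST f⟩
  have hdN : d ≤ N := by
    have := LinearMap.finrank_le_finrank_of_injective hTinj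
    simpa [hd] using this
  -- toLin' G = T ∘ S
  have hGTS : Matrix.toLin' G = T ∘ₗ S := by
    apply LinearMap.ext; intro c; funext j
    rw [Matrix.toLin'_apply]
    simp only [LinearMap.comp_apply, hTf, hSc, inner_sum, inner_smul_right]
    simp [Matrix.mulVec, dotProduct, hG, mul_comm]
  -- the frame Hamiltonian
  set D : (Fin N → ℂ) →ₗ[ℂ] (Fin N → ℂ) := Matrix.toLin' Ecal with hD
  set Hop : H →ₗ[ℂ] H := S ∘ₗ D ∘ₗ T with hHop
  have hMkey : Matrix.toLin' (G * Ecal * G) = T ∘ₗ (Hop ∘ₗ S) := by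
    rw [Matrix.toLin'_mul, Matrix.toLin'_mul, hGTS, hHop, hD]
    ext c; simp [LinearMap.comp_apply]
  -- kernel dimensions
  have hker : LinearMap.ker (Matrix.toLin' (G * Ecal * G)) = LinearMap.ker (Hop ∘ₗ S) := by
    rw [hMkey, LinearMap.ker_comp, LinearMap.ker_eq_bot.2 hTinj, Submodule.comap_bot]
  have hrange : LinearMap.range (Hop ∘ₗ S) = LinearMap.range Hop := by
    rw [LinearMap.range_comp, LinearMap.range_eq_top.2 hSsurj, Submodule.map_top]
  have h1 : Module.finrank ℂ (LinearMap.range Hop) +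
      Module.finrank ℂ (LinearMap.ker (Hop ∘ₗ S)) = N := by
    rw [← hrange]
    have := LinearMap.finrank_range_add_finrank_ker (Hop ∘ₗ S)
    simpa using this
  have h2 : Module.finrank ℂ (LinearMap.range Hop) +
      Module.finrank ℂ (LinearMap.ker Hop) = d := by
    rw [← hd]; exact LinearMap.finrank_range_add_finrank_ker Hop
  -- identify Hop with the sum
  have hHopf : ∀ f, Hop f = ∑ j, E j • (⟪e j, f⟫_ℂ • e j) := by
    intro f
    rw [hHop]
    simp only [LinearMap.comp_apply, hD, Matrix.toLin'_apply, hSc, hEcal]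
    congr 1; funext j
    rw [← Complex.coe_smul, smul_smul]
    simp [Matrix.mulVec, diagonal_dotProduct, hTf]
  have hlhs : (∃ f : H, f ≠ 0 ∧ (∑ j, E j • (⟪e j, f⟫_ℂ • e j)) = 0) ↔
      0 < Module.finrank ℂ (LinearMap.ker Hop) := by
    rw [Module.finrank_pos_iff, Submodule.nontrivial_iff_ne_bot, Submodule.ne_bot_iff]
    constructor
    · rintro ⟨f, hf, h0⟩; exact ⟨f, by simp [LinearMap.mem_ker, hHopf, h0], hf⟩
    · rintro ⟨f, hf0, hf⟩
      exact ⟨f, hf, by rw [← hHopf]; exact hf0⟩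
  rw [hlhs, hker]
  omega
end

section
/- Let k ≥ 3 be an integer, let e_1, …, e_k be a Parseval frame in a finite-dimensional complex inner product space H with ⟨e_j, e_j⟩ = (k−1)/k for all j and ⟨e_i, e_j⟩ = −1/k for all i ≠ j (a Mercedes-type Parseval frame), and let E_1, …, E_k be real numbers. Then a complex number λ is an eigenvalue of the operator H_{E,e} = ∑_{j=1}^k E_j ⟨·, e_j⟩ e_j on H if and only if ∑_{i=1}^k ∏_{j ≠ i} (E_j − λ) = 0. -/
open scoped InnerProductSpace

open Finset in
private lemma algB {k : ℕ} (hk : 2 ≤ k) (a : Fin k → ℂ) :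
    (∃ v : Fin k → ℂ, v ≠ 0 ∧ ∑ i, v i = 0 ∧ ∃ c, ∀ i, a i * v i = c) ↔
      ∑ i : Fin k, ∏ j ∈ Finset.univ.erase i, a j = 0 := by
  by_cases hall : ∀ i, a i ≠ 0
  · have hprodne : (∏ j, a j) ≠ 0 := Finset.prod_ne_zero_iff.2 fun i _ => hall i
    have hpe : ∀ i : Fin k, ∏ j ∈ Finset.univ.erase i, a j = (∏ j, a j) * (a i)⁻¹ := by
      intro i
      rw [← Finset.mul_prod_erase univ a (mem_univ i)]
      field_simp [hall i]
    have hsum : ∑ i : Fin k, ∏ j ∈ Finset.univ.erase i, a j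
        = (∏ j, a j) * ∑ i, (a i)⁻¹ := by
      rw [Finset.mul_sum]; exact Finset.sum_congr rfl fun i _ => hpe i
    rw [hsum, mul_eq_zero, or_iff_right hprodne]
    constructor
    · rintro ⟨v, hv0, hvs, c, hc⟩
      have hcne : c ≠ 0 := by
        rintro rfl
        apply hv0
        funext i
        have := hc i
        exact (mul_eq_zero.1 this).resolve_left (hall i)
      have hv : ∀ i, v i = c * (a i)⁻¹ := by
        intro i
        field_simp [hall i]
        rw [mul_comm]; exact hc i
      have : (0:ℂ) = c * ∑ i, (a i)⁻¹ := by
        rw [← hvs, Finset.mul_sum]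
        exact Finset.sum_congr rfl fun i _ => hv i
      exact (mul_eq_zero.1 this.symm).resolve_left hcne
    · intro h
      have i0 : Fin k := ⟨0, by omega⟩
      exact ⟨fun i => (a i)⁻¹, by
        intro h0
        have := congrFun h0 i0
        simp [inv_eq_zero] at this
        exact hall i0 this, h, 1, fun i => mul_inv_cancel₀ (hall i)⟩
  · push_neg at hall
    obtain ⟨z, hz⟩ := hall
    by_cases h2 : ∃ w, w ≠ z ∧ a w = 0
    · obtain ⟨w, hwz, hw⟩ := h2
      constructor
      · intro _
        refine Finset.sum_eq_zero fun i _ => ?_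
        rcases ne_or_eq i z with hiz | rfl
        · exact Finset.prod_eq_zero (Finset.mem_erase.2 ⟨Ne.symm hiz, mem_univ z⟩) hz
        · exact Finset.prod_eq_zero (Finset.mem_erase.2 ⟨hwz, mem_univ w⟩) hw
      · intro _
        refine ⟨Pi.single z 1 - Pi.single w 1, ?_, ?_, 0, ?_⟩
        · intro h0
          have := congrFun h0 z
          simp [Pi.single_apply, hwz.symm] at this
        · simp [Finset.sum_sub_distrib]
        · intro i
          rcases eq_or_ne i z with rfl | hiz
          · simp [hz]
          rcases eq_or_ne i w with rfl | hiw
          · simp [hw]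
          · simp [Pi.single_apply, hiz, hiw]
    · push_neg at h2
      have hne : ∀ w, w ≠ z → a w ≠ 0 := h2
      constructor
      · rintro ⟨v, hv0, hvs, c, hc⟩
        exfalso
        have hc0 : c = 0 := by have := hc z; rwa [hz, zero_mul, eq_comm] at this
        have hvi : ∀ i, i ≠ z → v i = 0 := by
          intro i hiz
          have := hc i
          rw [hc0] at this
          exact (mul_eq_zero.1 this).resolve_left (hne i hiz)
        have hvz : v z = 0 := by
          have := hvs
          rwa [Finset.sum_eq_single z (fun i _ hiz => hvi i hiz) (fun h => absurd (mem_univ z) h)] at this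
        exact hv0 (funext fun i => by rcases eq_or_ne i z with rfl | h; exacts [hvz, hvi i h])
      · intro h
        exfalso
        have : ∑ i : Fin k, ∏ j ∈ Finset.univ.erase i, a j = ∏ j ∈ Finset.univ.erase z, a j := by
          rw [Finset.sum_eq_single z]
          · intro i _ hiz
            exact Finset.prod_eq_zero (Finset.mem_erase.2 ⟨Ne.symm hiz, mem_univ z⟩) hz
          · exact fun h => absurd (mem_univ z) h
        rw [this] at h
        exact Finset.prod_ne_zero_iff.2 (fun j hj => hne j (Finset.mem_erase.1 hj).1) h


/-- For a Mercedes-type Parseval frame `e₁,…,e_k` (`k ≥ 3`) and reals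
`E₁,…,E_k`, a complex number `λ` is an eigenvalue of `H_{E,e} = ∑_j E j ⟨·, e j⟩ e j`
iff `∑_{i=1}^k ∏_{j ≠ i} (E j − λ) = 0`. -/
theorem stmt_9 {H : Type*} [NormedAddCommGroup H] [InnerProductSpace ℂ H]
    [FiniteDimensional ℂ H] {k : ℕ} (hk : 3 ≤ k) (e : Fin k → H)
    (hPF : ∀ f : H, ∑ j, ‖⟪e j, f⟫_ℂ‖ ^ 2 = ‖f‖ ^ 2)
    (hdiag : ∀ j, ⟪e j, e j⟫_ℂ = ((k : ℂ) - 1) / k)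
    (hoff : ∀ i j, i ≠ j → ⟪e i, e j⟫_ℂ = -1 / k)
    (E : Fin k → ℝ) (lam : ℂ) :
    (∃ f : H, f ≠ 0 ∧ (∑ j, E j • (⟪e j, f⟫_ℂ • e j)) = lam • f) ↔
      ∑ i : Fin k, ∏ j ∈ Finset.univ.erase i, ((E j : ℂ) - lam) = 0 := by
  have hkc : (k : ℂ) ≠ 0 := by
    exact_mod_cast Nat.cast_ne_zero.2 (by omega : k ≠ 0)
  have hrow : ∀ i, ∑ j, ⟪e i, e j⟫_ℂ = 0 := by
    intro i
    rw [← Finset.add_sum_erase _ _ (Finset.mem_univ i), hdiag i,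
      Finset.sum_congr rfl (fun j hj => hoff i j (Ne.symm (Finset.mem_erase.1 hj).1)),
      Finset.sum_const, Finset.card_erase_of_mem (Finset.mem_univ i), Finset.card_univ,
      Fintype.card_fin, nsmul_eq_mul]
    have h1 : ((k - 1 : ℕ) : ℂ) = (k : ℂ) - 1 := by
      have h : 1 ≤ k := by omega
      push_cast [h]
      ring
    rw [h1]
    field_simp
    ring
  have hsum0 : ∑ i, e i = 0 := by
    have h : ⟪(∑ i, e i), (∑ j, e j)⟫_ℂ = 0 := by
      rw [sum_inner]
      simp [inner_sum, hrow]
    exact inner_self_eq_zero.mp h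
  have hip : ∀ (v : Fin k → ℂ) (i : Fin k),
      ⟪e i, ∑ j, v j • e j⟫_ℂ = v i - (∑ j, v j) / k := by
    intro v i
    rw [inner_sum]
    simp_rw [inner_smul_right]
    rw [← Finset.add_sum_erase _ _ (Finset.mem_univ i), hdiag i,
      Finset.sum_congr rfl (fun j hj => by
        rw [hoff i j (Ne.symm (Finset.mem_erase.1 hj).1)]),
      ← Finset.sum_mul, Finset.sum_erase_eq_sub (Finset.mem_univ i)]
    field_simp
    ring
  have hsm : ∀ (j : Fin k) (x : H), E j • x = (E j : ℂ) • x := by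
    intro j x
    rw [← algebraMap_smul ℂ (E j) x]
    norm_num
  constructor
  · rintro ⟨f, hf0, heig⟩
    set v : Fin k → ℂ := fun i => ⟪e i, f⟫_ℂ with hv
    refine (algB (by omega) (fun j => (E j : ℂ) - lam)).mp
      ⟨v, ?_, ?_, (∑ j, (E j : ℂ) * v j) / k, ?_⟩
    · intro h0
      apply hf0
      have hnorm : ‖f‖ ^ 2 = 0 := by
        rw [← hPF f]
        refine Finset.sum_eq_zero fun j _ => ?_
        have : ⟪e j, f⟫_ℂ = 0 := congrFun h0 j
        simp [this]
      have := pow_eq_zero_iff (n := 2) (by norm_num) |>.mp hnorm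
      exact norm_eq_zero.mp this
    · have h : ∑ i, ⟪e i, f⟫_ℂ = ⟪(∑ i, e i), f⟫_ℂ := (sum_inner _ _ _).symm
      rw [hsum0, inner_zero_left] at h
      exact h
    · intro i
      have heig' : (∑ j, ((E j : ℂ) * v j) • e j) = lam • f := by
        rw [← heig]
        refine Finset.sum_congr rfl fun j _ => ?_
        rw [hsm j, smul_smul]
      have h1 : ⟪e i, ∑ j, ((E j : ℂ) * v j) • e j⟫_ℂ = lam * v i := by
        rw [heig', inner_smul_right]
      rw [hip (fun j => (E j : ℂ) * v j) i] at h1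
      linear_combination h1
  · intro hS
    obtain ⟨v, hv0, hvs, c, hc⟩ := (algB (by omega) (fun j => (E j : ℂ) - lam)).mpr hS
    refine ⟨∑ j, v j • e j, ?_, ?_⟩
    · intro h0
      apply hv0
      funext i
      have := hip v i
      rw [h0, hvs, inner_zero_right] at this
      simpa using this.symm
    · have hcoef : ∀ i, ⟪e i, ∑ j, v j • e j⟫_ℂ = v i := by
        intro i
        rw [hip v i, hvs]
        simp
      have hterm : ∀ j : Fin k, ((E j : ℂ) * v j) • e j = lam • (v j • e j) + c • e j := by
        intro j
        rw [show ((E j : ℂ) * v j) = lam * v j + c from by linear_combination hc j,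
          add_smul, smul_smul]
      calc ∑ j, E j • (⟪e j, ∑ l, v l • e l⟫_ℂ • e j)
          = ∑ j, ((E j : ℂ) * v j) • e j := by
            refine Finset.sum_congr rfl fun j _ => ?_
            rw [hcoef j, hsm j, smul_smul]
        _ = (∑ j, lam • (v j • e j)) + ∑ j, c • e j := by
            simp_rw [hterm, Finset.sum_add_distrib]
        _ = lam • ∑ j, v j • e j := by
            rw [← Finset.smul_sum, ← Finset.smul_sum, hsum0, smul_zero, add_zero]
end

section
/- Let β = (1+√5)/2, β̄ = (1−√5)/2, and in ℝ³ set f₁ = (β,1,0), f₂ = (β,−1,0), f₃ = (1,0,β), f₄ = (−1,0,β), f₅ = (0,β,1), f₆ = (0,β,−1), and define the Parseval frame e_j = f_j / √(2(1+β²)) for j = 1,…,6. Let E₁,…,E₆ be real numbers and let H = ∑_{j=1}^6 E_j ⟨·, e_j⟩ e_j on ℝ³. If λ is an eigenvalue of H, then det W(λ) = 0, where W(λ) is the 3×3 matrix with entries W_{ij}(λ) = E_j − E_{3+i} when i + j = 4, and W_{ij}(λ) = β E_j − β̄ E_{3+i} − √5 λ when i + j ≠ 4. -/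
open scoped InnerProductSpace

/-- Let `β = (1+√5)/2`, `β' = (1−√5)/2`, and let `e j = f j / √(2(1+β²))`
be the Parseval frame in `ℝ³` obtained by rescaling the conference-matrix Grassmannian frame
`f₁ = (β,1,0), f₂ = (β,−1,0), f₃ = (1,0,β), f₄ = (−1,0,β), f₅ = (0,β,1), f₆ = (0,β,−1)`.
If `λ` is an eigenvalue of `H = ∑_{j=1}^6 E j ⟨·, e j⟩ e j`, then `det W(λ) = 0`, where
`W_{ij}(λ) = E_j − E_{3+i}` for `i+j = 4` and `W_{ij}(λ) = β E_j − β' E_{3+i} − √5 λ`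
otherwise. -/
theorem stmt_10 (E : Fin 6 → ℝ) (lam : ℝ)
    (β β' : ℝ) (hβ : β = (1 + Real.sqrt 5) / 2) (hβ' : β' = (1 - Real.sqrt 5) / 2)
    (fv : Fin 6 → Fin 3 → ℝ)
    (hfv : fv = ![![β, 1, 0], ![β, -1, 0], ![1, 0, β], ![-1, 0, β], ![0, β, 1], ![0, β, -1]])
    (e : Fin 6 → EuclideanSpace ℝ (Fin 3))
    (he : ∀ j, e j = (Real.sqrt (2 * (1 + β ^ 2)))⁻¹ •
      (WithLp.equiv 2 (Fin 3 → ℝ)).symm (fv j))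
    (heig : ∃ f : EuclideanSpace ℝ (Fin 3), f ≠ 0 ∧
      (∑ j, E j • (⟪e j, f⟫_ℝ • e j)) = lam • f) :
    Matrix.det
      !![β * E 0 - β' * E 3 - Real.sqrt 5 * lam, β * E 1 - β' * E 3 - Real.sqrt 5 * lam,
          E 2 - E 3;
        β * E 0 - β' * E 4 - Real.sqrt 5 * lam, E 1 - E 4,
          β * E 2 - β' * E 4 - Real.sqrt 5 * lam;
        E 0 - E 5, β * E 1 - β' * E 5 - Real.sqrt 5 * lam,
          β * E 2 - β' * E 5 - Real.sqrt 5 * lam] = 0 := by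

  obtain ⟨f, hf0, hf⟩ := heig
  set s : ℝ := Real.sqrt (2 * (1 + β ^ 2)) with hs_def
  have hspos : 0 < s := Real.sqrt_pos.mpr (by positivity)
  have hs : s ^ 2 = 2 * (1 + β ^ 2) := Real.sq_sqrt (by positivity)
  have hr5 : Real.sqrt 5 = 2 * β - 1 := by rw [hβ]; ring
  have hb2 : β ^ 2 = β + 1 := by
    have h5 : Real.sqrt 5 ^ 2 = 5 := Real.sq_sqrt (by norm_num)
    rw [hβ]; nlinarith [h5]
  have hbp : β' = 1 - β := by rw [hβ, hβ']; ring
  have hβpos : 0 < β := by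
    rw [hβ]; have := Real.sqrt_nonneg 5; linarith
  have hsne : (s : ℝ) ≠ 0 := ne_of_gt hspos
  -- coordinate form of the eigen-equation
  have key : ∀ i : Fin 3,
      ∑ j, E j * ((s⁻¹ * ∑ k, fv j k * f k) * (s⁻¹ * fv j i)) = lam * f i := by
    intro i
    have h1 := congrArg
      (fun v : EuclideanSpace ℝ (Fin 3) => ⟪v, EuclideanSpace.single i (1:ℝ)⟫_ℝ) hf
    simp only [sum_inner, real_inner_smul_left, he, PiLp.inner_apply,
      RCLike.inner_apply, conj_trivial, WithLp.equiv_symm_apply, PiLp.toLp_apply,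
      PiLp.smul_apply, smul_eq_mul, EuclideanSpace.single_apply, mul_ite,
      mul_one, mul_zero, ite_mul, one_mul, zero_mul, Finset.sum_ite_eq, Finset.sum_ite_eq', Finset.mem_univ, if_true] at h1
    rw [← h1]
    refine Finset.sum_congr rfl fun j _ => ?_
    rw [Finset.mul_sum]
    refine congrArg (E j * ·) (congrArg (· * (s⁻¹ * fv j i)) ?_)
    exact Finset.sum_congr rfl fun k _ => by ring
  have Eq0 : ∀ i : Fin 3,
      ∑ j, E j * ((∑ k, fv j k * f k) * fv j i) = 2 * (1 + β ^ 2) * (lam * f i) := by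
    intro i
    have h2 : s ^ 2 * ∑ j, E j * ((s⁻¹ * ∑ k, fv j k * f k) * (s⁻¹ * fv j i))
        = s ^ 2 * (lam * f i) := by rw [key i]
    rw [Finset.mul_sum] at h2
    rw [← hs, ← h2]
    refine Finset.sum_congr rfl fun j _ => ?_
    field_simp
  have h0 := Eq0 0
  have h1 := Eq0 1
  have h2 := Eq0 2
  have hf00 : fv 0 0 = β := by rw [hfv]; rfl
  have hf01 : fv 0 1 = 1 := by rw [hfv]; rfl
  have hf02 : fv 0 2 = 0 := by rw [hfv]; rfl
  have hf10 : fv 1 0 = β := by rw [hfv]; rfl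
  have hf11 : fv 1 1 = -1 := by rw [hfv]; rfl
  have hf12 : fv 1 2 = 0 := by rw [hfv]; rfl
  have hf20 : fv 2 0 = 1 := by rw [hfv]; rfl
  have hf21 : fv 2 1 = 0 := by rw [hfv]; rfl
  have hf22 : fv 2 2 = β := by rw [hfv]; rfl
  have hf30 : fv 3 0 = -1 := by rw [hfv]; rfl
  have hf31 : fv 3 1 = 0 := by rw [hfv]; rfl
  have hf32 : fv 3 2 = β := by rw [hfv]; rfl
  have hf40 : fv 4 0 = 0 := by rw [hfv]; rfl
  have hf41 : fv 4 1 = β := by rw [hfv]; rfl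
  have hf42 : fv 4 2 = 1 := by rw [hfv]; rfl
  have hf50 : fv 5 0 = 0 := by rw [hfv]; rfl
  have hf51 : fv 5 1 = β := by rw [hfv]; rfl
  have hf52 : fv 5 2 = -1 := by rw [hfv]; rfl
  simp only [Fin.sum_univ_six, Fin.sum_univ_three] at h0 h1 h2
  rw [hf00, hf01, hf02, hf10, hf11, hf12, hf20, hf21, hf22, hf30, hf31, hf32, hf40, hf41, hf42, hf50, hf51, hf52] at h0 h1 h2
  rw [← Matrix.exists_mulVec_eq_zero_iff]
  refine ⟨![β * f 0 + f 1, β * f 0 - f 1, f 0 + β * f 2], ?_, ?_⟩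
  · intro hc
    apply hf0
    have c0 := congrFun hc 0
    have c1 := congrFun hc 1
    have c2 := congrFun hc 2
    simp at c0 c1 c2
    have hx : f 0 = 0 := by
      have : β * f 0 = 0 := by linarith
      exact (mul_eq_zero.mp this).resolve_left (ne_of_gt hβpos)
    have hy : f 1 = 0 := by linarith
    have hz : f 2 = 0 := by
      have : β * f 2 = 0 := by rw [hx] at c2; linarith
      exact (mul_eq_zero.mp this).resolve_left (ne_of_gt hβpos)
    ext i
    fin_cases i <;> simp [hx, hy, hz]
  · funext i
    fin_cases i <;>
      simp [Matrix.mulVec, dotProduct, Fin.sum_univ_three] <;>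
      rw [hr5, hbp]
    · linear_combination h0 + (2 * E 3 * f 0 - 2 * f 0 * lam) * hb2
    · linear_combination (β/2) * h0 + ((β-1)/2) * h1 + (1/2) * h2 +
        (- f 2 * lam + f 1 * lam * β - f 0 * lam + f 0 * lam * β
          + (1/2) * E 5 * f 2 - (1/2) * E 5 * f 1 * β + (1/2) * E 4 * f 2
          - (1/2) * E 4 * f 1 * β + E 4 * f 0 + (1/2) * E 1 * f 1
          - (1/2) * E 1 * f 0 * β - (1/2) * E 0 * f 1 - (1/2) * E 0 * f 0 * β) * hb2
    · linear_combination (β/2) * h0 + ((1-β)/2) * h1 + (1/2) * h2 +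
        (- f 2 * lam - f 1 * lam * β - f 0 * lam + f 0 * lam * β
          + (1/2) * E 5 * f 2 + (1/2) * E 5 * f 1 * β + E 5 * f 0
          + (1/2) * E 4 * f 2 + (1/2) * E 4 * f 1 * β + (1/2) * E 1 * f 1
          - (1/2) * E 1 * f 0 * β - (1/2) * E 0 * f 1 - (1/2) * E 0 * f 0 * β) * hb2
end

section
/- Let (e_j)_{j∈J} (J countable) be a Parseval frame in a complex Hilbert space H. Then for every subset J₀ ⊆ J and every f ∈ H, ∑_{j∈J₀} |⟨f, e_j⟩|² − ‖∑_{j∈J₀} ⟨f, e_j⟩ e_j‖² = ∑_{j∈J∖J₀} |⟨f, e_j⟩|² − ‖∑_{j∈J∖J₀} ⟨f, e_j⟩ e_j‖² (the fundamental identity for Parseval frames). -/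
open scoped InnerProductSpace ComplexConjugate

private lemma syn_bound {H J : Type*} [NormedAddCommGroup H] [InnerProductSpace ℂ H]
    (e : J → H)
    (hB : ∀ g : H, ∀ t : Finset J, ∑ j ∈ t, ‖⟪e j, g⟫_ℂ‖ ^ 2 ≤ ‖g‖ ^ 2)
    (c : J → ℂ) (t : Finset J) :
    ‖∑ j ∈ t, c j • e j‖ ≤ Real.sqrt (∑ j ∈ t, ‖c j‖ ^ 2) := by
  set g : H := ∑ j ∈ t, c j • e j with hg
  have h1 : (‖g‖ : ℝ) ^ 2 = RCLike.re (⟪g, g⟫_ℂ) := by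
    rw [inner_self_eq_norm_sq]
  have h2 : ⟪g, g⟫_ℂ = ∑ j ∈ t, conj (c j) * ⟪e j, g⟫_ℂ := by
    rw [hg, sum_inner]
    exact Finset.sum_congr rfl fun j _ => inner_smul_left _ _ _
  have h3 : ‖g‖ ^ 2 ≤ Real.sqrt (∑ j ∈ t, ‖c j‖ ^ 2) * ‖g‖ := by
    calc ‖g‖ ^ 2 = RCLike.re (⟪g, g⟫_ℂ) := h1
      _ ≤ ‖⟪g, g⟫_ℂ‖ := RCLike.re_le_norm _
      _ = ‖∑ j ∈ t, conj (c j) * ⟪e j, g⟫_ℂ‖ := by rw [h2]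
      _ ≤ ∑ j ∈ t, ‖conj (c j) * ⟪e j, g⟫_ℂ‖ := norm_sum_le _ _
      _ = ∑ j ∈ t, ‖c j‖ * ‖⟪e j, g⟫_ℂ‖ := by
          simp [norm_mul]
      _ ≤ Real.sqrt (∑ j ∈ t, ‖c j‖ ^ 2) * Real.sqrt (∑ j ∈ t, ‖⟪e j, g⟫_ℂ‖ ^ 2) :=
          Real.sum_mul_le_sqrt_mul_sqrt _ _ _
      _ ≤ Real.sqrt (∑ j ∈ t, ‖c j‖ ^ 2) * Real.sqrt (‖g‖ ^ 2) := by
          exact mul_le_mul_of_nonneg_left (Real.sqrt_le_sqrt (hB g t)) (Real.sqrt_nonneg _)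
      _ = Real.sqrt (∑ j ∈ t, ‖c j‖ ^ 2) * ‖g‖ := by
          rw [Real.sqrt_sq (norm_nonneg _)]
  rcases eq_or_lt_of_le (norm_nonneg g) with h0 | h0
  · rw [← h0]; exact Real.sqrt_nonneg _
  · nlinarith [h3, Real.sqrt_nonneg (∑ j ∈ t, ‖c j‖ ^ 2)]

private lemma frame_summable_s11 {H J : Type*} [NormedAddCommGroup H] [InnerProductSpace ℂ H]
    [CompleteSpace H] [Countable J] (e : J → H)
    (hPF : ∀ f : H, HasSum (fun j => ‖⟪e j, f⟫_ℂ‖ ^ 2) (‖f‖ ^ 2)) (f : H) :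
    Summable (fun j => ⟪e j, f⟫_ℂ • e j) := by
  have hB : ∀ g : H, ∀ t : Finset J, ∑ j ∈ t, ‖⟪e j, g⟫_ℂ‖ ^ 2 ≤ ‖g‖ ^ 2 :=
    fun g t => sum_le_hasSum t (fun j _ => sq_nonneg _) (hPF g)
  rw [summable_iff_vanishing_norm]
  intro ε hε
  obtain ⟨s, hs⟩ := summable_iff_vanishing_norm.1 (hPF f).summable (ε ^ 2) (by positivity)
  refine ⟨s, fun t ht => ?_⟩
  have h1 := syn_bound e hB (fun j => ⟪e j, f⟫_ℂ) t
  have h2 := hs t ht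
  have h3 : ∑ j ∈ t, ‖⟪e j, f⟫_ℂ‖ ^ 2 < ε ^ 2 := by
    calc ∑ j ∈ t, ‖⟪e j, f⟫_ℂ‖ ^ 2 ≤ ‖∑ j ∈ t, ‖⟪e j, f⟫_ℂ‖ ^ 2‖ := le_abs_self _
      _ < ε ^ 2 := h2
  calc ‖∑ j ∈ t, ⟪e j, f⟫_ℂ • e j‖ ≤ Real.sqrt (∑ j ∈ t, ‖⟪e j, f⟫_ℂ‖ ^ 2) := h1
    _ < Real.sqrt (ε ^ 2) := by
        apply Real.sqrt_lt_sqrt (Finset.sum_nonneg fun j _ => sq_nonneg _) h3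
    _ = ε := Real.sqrt_sq hε.le

private lemma frame_reconstruct {H J : Type*} [NormedAddCommGroup H] [InnerProductSpace ℂ H]
    [CompleteSpace H] [Countable J] (e : J → H)
    (hPF : ∀ f : H, HasSum (fun j => ‖⟪e j, f⟫_ℂ‖ ^ 2) (‖f‖ ^ 2)) (f : H) :
    HasSum (fun j => ⟪e j, f⟫_ℂ • e j) f := by
  have hsum := frame_summable_s11 e hPF
  set T : H →ₗ[ℂ] H :=
    { toFun := fun x => ∑' j, ⟪e j, x⟫_ℂ • e j
      map_add' := fun x y => by
        rw [← Summable.tsum_add (hsum x) (hsum y)]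
        exact tsum_congr fun j => by rw [inner_add_right, add_smul]
      map_smul' := fun a x => by
        simp only [RingHom.id_apply]
        rw [show (∑' j, ⟪e j, a • x⟫_ℂ • e j) = ∑' j, a • (⟪e j, x⟫_ℂ • e j) from
          tsum_congr fun j => by rw [inner_smul_right, smul_smul],
          ((hsum x).hasSum.const_smul a).tsum_eq]
        } with hT
  have key : T = LinearMap.id := by
    rw [← ext_inner_map]
    intro x
    have h1 : ⟪x, T x⟫_ℂ = ∑' j, ⟪x, ⟪e j, x⟫_ℂ • e j⟫_ℂ :=
      (((hsum x).hasSum).mapL (innerSL ℂ x)).tsum_eq.symm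
    have h2 : ∀ j, ⟪x, ⟪e j, x⟫_ℂ • e j⟫_ℂ = (‖⟪e j, x⟫_ℂ‖ ^ 2 : ℝ) := by
      intro j
      rw [inner_smul_right, ← inner_conj_symm x (e j), Complex.mul_conj']
      push_cast
      ring
    have h3 : ⟪x, T x⟫_ℂ = (‖x‖ ^ 2 : ℝ) := by
      rw [h1]
      rw [tsum_congr h2]
      exact ((hPF x).mapL Complex.ofRealCLM).tsum_eq
    have h4 : ⟪T x, x⟫_ℂ = conj (⟪x, T x⟫_ℂ) := (inner_conj_symm _ _).symm
    rw [h4, h3]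
    simp [inner_self_eq_norm_sq_to_K]
  have : T f = f := by rw [key]; rfl
  have := (hsum f).hasSum
  rwa [show (∑' j, ⟪e j, f⟫_ℂ • e j) = T f from rfl, ‹T f = f›] at this

set_option maxHeartbeats 1000000 in
/-- The fundamental identity for Parseval frames: for every subset `J₀ ⊆ J`
and every `f`,
`∑_{j∈J₀} |⟨f,e j⟩|² − ‖∑_{j∈J₀} ⟨f,e j⟩ e j‖² = ∑_{j∉J₀} |⟨f,e j⟩|² − ‖∑_{j∉J₀} ⟨f,e j⟩ e j‖²`. -/
theorem stmt_11 {H J : Type*} [NormedAddCommGroup H] [InnerProductSpace ℂ H] [CompleteSpace H]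
    [Countable J] (e : J → H)
    (hPF : ∀ f : H, HasSum (fun j => ‖⟪e j, f⟫_ℂ‖ ^ 2) (‖f‖ ^ 2))
    (J₀ : Set J) (f : H) :
    (∑' j : J₀, ‖⟪e j.1, f⟫_ℂ‖ ^ 2) - ‖∑' j : J₀, ⟪e j.1, f⟫_ℂ • e j.1‖ ^ 2 =
      (∑' j : ↥J₀ᶜ, ‖⟪e j.1, f⟫_ℂ‖ ^ 2) - ‖∑' j : ↥J₀ᶜ, ⟪e j.1, f⟫_ℂ • e j.1‖ ^ 2 := by
  have hsum : Summable (fun j : J => ⟪e j, f⟫_ℂ • e j) := frame_summable_s11 e hPF f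
  have hrec : HasSum (fun j : J => ⟪e j, f⟫_ℂ • e j) f := frame_reconstruct e hPF f
  set g₀ : H := ∑' j : J₀, ⟪e j.1, f⟫_ℂ • e j.1 with hg₀
  set g₁ : H := ∑' j : ↥J₀ᶜ, ⟪e j.1, f⟫_ℂ • e j.1 with hg₁
  have h₀ : HasSum (fun j : J₀ => ⟪e j.1, f⟫_ℂ • e j.1) g₀ := (hsum.subtype _).hasSum
  have h₁ : HasSum (fun j : ↥J₀ᶜ => ⟪e j.1, f⟫_ℂ • e j.1) g₁ := (hsum.subtype _).hasSum
  have hsplit : g₀ + g₁ = f := by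
    have h₀c : HasSum ((fun j : J => ⟪e j, f⟫_ℂ • e j) ∘ (Subtype.val : J₀ → J)) g₀ := h₀
    have h₁c : HasSum ((fun j : J => ⟪e j, f⟫_ℂ • e j) ∘ (Subtype.val : ↥J₀ᶜ → J)) g₁ := h₁
    have := (hasSum_subtype_iff_indicator (s := J₀)).1 h₀c
    have h₁' := (hasSum_subtype_iff_indicator (s := J₀ᶜ)).1 h₁c
    have hadd := this.add h₁'
    have : (fun j : J => J₀.indicator (fun j => ⟪e j, f⟫_ℂ • e j) j
        + J₀ᶜ.indicator (fun j => ⟪e j, f⟫_ℂ • e j) j) = fun j => ⟪e j, f⟫_ℂ • e j := by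
      funext j
      by_cases hj : j ∈ J₀ <;> simp [Set.indicator_of_mem, Set.indicator_of_notMem, hj]
    rw [this] at hadd
    exact hadd.unique hrec
  -- scalar sums
  have hs₀ : HasSum (fun j : J₀ => ‖⟪e j.1, f⟫_ℂ‖ ^ 2) (∑' j : J₀, ‖⟪e j.1, f⟫_ℂ‖ ^ 2) :=
    ((hPF f).summable.subtype _).hasSum
  have hs₁ : HasSum (fun j : ↥J₀ᶜ => ‖⟪e j.1, f⟫_ℂ‖ ^ 2) (∑' j : ↥J₀ᶜ, ‖⟪e j.1, f⟫_ℂ‖ ^ 2) :=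
    ((hPF f).summable.subtype _).hasSum
  -- a₀ = re ⟪f, g₀⟫
  have key : ∀ (s : Set J) (g : H), HasSum (fun j : s => ⟪e j.1, f⟫_ℂ • e j.1) g →
      (∑' j : s, ‖⟪e j.1, f⟫_ℂ‖ ^ 2) = RCLike.re (⟪f, g⟫_ℂ) := by
    intro s g hg
    have h1 : HasSum (fun j : s => ⟪f, ⟪e j.1, f⟫_ℂ • e j.1⟫_ℂ) ⟪f, g⟫_ℂ :=
      hg.mapL (innerSL ℂ f)
    have h2 : ∀ j : s, ⟪f, ⟪e j.1, f⟫_ℂ • e j.1⟫_ℂ = (‖⟪e j.1, f⟫_ℂ‖ ^ 2 : ℝ) := by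
      intro j
      rw [inner_smul_right, ← inner_conj_symm f (e j.1), Complex.mul_conj']
      push_cast
      ring
    rw [funext h2] at h1
    have h3 := ((Complex.hasSum_iff _ _).1 h1).1
    have h4 : (fun j : s => (((‖⟪e j.1, f⟫_ℂ‖ ^ 2 : ℝ) : ℂ)).re)
        = (fun j : s => ‖⟪e j.1, f⟫_ℂ‖ ^ 2) := funext fun j => Complex.ofReal_re _
    rw [h4] at h3
    exact h3.tsum_eq
  have k₀ := key J₀ g₀ h₀
  have k₁ := key J₀ᶜ g₁ h₁
  rw [k₀, k₁]
  have e₀ : ⟪f, g₀⟫_ℂ = ⟪g₀ + g₁, g₀⟫_ℂ := by rw [hsplit]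
  have e₁ : ⟪f, g₁⟫_ℂ = ⟪g₀ + g₁, g₁⟫_ℂ := by rw [hsplit]
  rw [e₀, e₁, inner_add_left, inner_add_left, map_add, map_add]
  have n₀ : RCLike.re (⟪g₀, g₀⟫_ℂ) = ‖g₀‖ ^ 2 := inner_self_eq_norm_sq _
  have n₁ : RCLike.re (⟪g₁, g₁⟫_ℂ) = ‖g₁‖ ^ 2 := inner_self_eq_norm_sq _
  have cross : RCLike.re (⟪g₁, g₀⟫_ℂ) = RCLike.re (⟪g₀, g₁⟫_ℂ) :=
    inner_re_symm _ _
  rw [n₀, n₁, cross]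
  ring
end

section
/- Let (e_j)_{j∈J} (J countable) be a Parseval frame in a complex Hilbert space H. Then for every subset J₀ ⊆ J and every f ∈ H, ∑_{j∈J₀} |⟨f, e_j⟩|² + ‖∑_{j∈J∖J₀} ⟨f, e_j⟩ e_j‖² ≥ (3/4) ‖f‖². -/
open scoped InnerProductSpace

/-- Finite Bessel-type bound: in a Parseval frame, the norm of a finite partial sum
`∑ j ∈ s, ⟪e j, f⟫ • e j` is controlled by the corresponding coefficient sum. -/
lemma stmt_12_key {H J : Type*} [NormedAddCommGroup H] [InnerProductSpace ℂ H]
    (e : J → H)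
    (hPF : ∀ f : H, HasSum (fun j => ‖⟪e j, f⟫_ℂ‖ ^ 2) (‖f‖ ^ 2))
    (c : J → ℂ) (s : Finset J) :
    ‖∑ j ∈ s, c j • e j‖ ^ 2 ≤ ∑ j ∈ s, ‖c j‖ ^ 2 := by
  set g : H := ∑ j ∈ s, c j • e j with hg
  have h1 : ‖g‖ ^ 2 ≤ ∑ j ∈ s, ‖c j‖ * ‖⟪e j, g⟫_ℂ‖ := by
    have hre : (‖g‖ : ℝ) ^ 2 = RCLike.re ⟪g, g⟫_ℂ :=
      (inner_self_eq_norm_sq (𝕜 := ℂ) g).symm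
    rw [hre]
    have h2 : ⟪g, g⟫_ℂ = ∑ j ∈ s, c j * ⟪g, e j⟫_ℂ := by
      rw [hg]
      rw [inner_sum]
      exact Finset.sum_congr rfl fun j _ => inner_smul_right _ _ _
    calc RCLike.re ⟪g, g⟫_ℂ ≤ ‖⟪g, g⟫_ℂ‖ := RCLike.re_le_norm _
      _ = ‖∑ j ∈ s, c j * ⟪g, e j⟫_ℂ‖ := by rw [h2]
      _ ≤ ∑ j ∈ s, ‖c j * ⟪g, e j⟫_ℂ‖ := norm_sum_le _ _
      _ = ∑ j ∈ s, ‖c j‖ * ‖⟪e j, g⟫_ℂ‖ := by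
          refine Finset.sum_congr rfl fun j _ => ?_
          rw [norm_mul, norm_inner_symm]
  have h3 : ∑ j ∈ s, ‖⟪e j, g⟫_ℂ‖ ^ 2 ≤ ‖g‖ ^ 2 :=
    sum_le_hasSum s (fun j _ => by positivity) (hPF g)
  have h4 : (∑ j ∈ s, ‖c j‖ * ‖⟪e j, g⟫_ℂ‖) ^ 2 ≤
      (∑ j ∈ s, ‖c j‖ ^ 2) * ∑ j ∈ s, ‖⟪e j, g⟫_ℂ‖ ^ 2 :=
    Finset.sum_mul_sq_le_sq_mul_sq s _ _
  have hA : (0 : ℝ) ≤ ∑ j ∈ s, ‖c j‖ ^ 2 := Finset.sum_nonneg fun j _ => by positivity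
  have hgn : (0 : ℝ) ≤ ‖g‖ := norm_nonneg g
  nlinarith [sq_nonneg (‖g‖ ^ 2), sq_nonneg ‖g‖,
    Finset.sum_nonneg (fun j (_ : j ∈ s) => mul_nonneg (norm_nonneg (c j)) (norm_nonneg ⟪e j, g⟫_ℂ))]

/-- For a Parseval frame `e` indexed by a countable set `J`, every subset
`J₀ ⊆ J` and every `f`:
`∑_{j∈J₀} |⟨f, e j⟩|² + ‖∑_{j∈J∖J₀} ⟨f, e j⟩ e j‖² ≥ (3/4)‖f‖²`. -/
theorem stmt_12 {H J : Type*} [NormedAddCommGroup H] [InnerProductSpace ℂ H] [CompleteSpace H]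
    [Countable J] (e : J → H)
    (hPF : ∀ f : H, HasSum (fun j => ‖⟪e j, f⟫_ℂ‖ ^ 2) (‖f‖ ^ 2))
    (J₀ : Set J) (f : H) :
    (3 / 4 : ℝ) * ‖f‖ ^ 2 ≤
      (∑' j : J₀, ‖⟪e j.1, f⟫_ℂ‖ ^ 2) + ‖∑' j : ↥J₀ᶜ, ⟪e j.1, f⟫_ℂ • e j.1‖ ^ 2 := by
  classical
  set c : J → ℂ := fun j => ⟪e j, f⟫_ℂ with hc
  have hsq : Summable (fun j => ‖c j‖ ^ 2) := (hPF f).summable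
  -- summability of the vector series on `J₀ᶜ`
  have hsum : Summable (fun j : ↥J₀ᶜ => c j.1 • e j.1) := by
    rw [summable_iff_vanishing_norm]
    intro ε hε
    have hs2 : Summable (fun j : ↥J₀ᶜ => ‖c j.1‖ ^ 2) := hsq.subtype _
    obtain ⟨s, hs⟩ := summable_iff_vanishing_norm.1 hs2 (ε ^ 2) (by positivity)
    refine ⟨s, fun t ht => ?_⟩
    have h1 : ‖∑ j ∈ t, c j.1 • e j.1‖ ^ 2 ≤ ∑ j ∈ t, ‖c j.1‖ ^ 2 := by
      have := stmt_12_key e hPF c (t.map (Function.Embedding.subtype _))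
      rwa [Finset.sum_map, Finset.sum_map] at this
    have h2 := hs t ht
    have h3 : ∑ j ∈ t, ‖c j.1‖ ^ 2 < ε ^ 2 := by
      calc ∑ j ∈ t, ‖c j.1‖ ^ 2 ≤ ‖∑ j ∈ t, ‖c j.1‖ ^ 2‖ := le_abs_self _
        _ < ε ^ 2 := h2
    nlinarith [norm_nonneg (∑ j ∈ t, c j.1 • e j.1)]
  set g : H := ∑' j : ↥J₀ᶜ, c j.1 • e j.1 with hgdef
  have hgsum : HasSum (fun j : ↥J₀ᶜ => c j.1 • e j.1) g := hsum.hasSum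
  set A : ℝ := ∑' j : J₀, ‖c j.1‖ ^ 2 with hA
  set B : ℝ := ∑' j : ↥J₀ᶜ, ‖c j.1‖ ^ 2 with hB
  have hAB : A + B = ‖f‖ ^ 2 := by
    rw [hA, hB, Summable.tsum_add_tsum_compl (hsq.subtype _) (hsq.subtype _), (hPF f).tsum_eq]
  have hA0 : 0 ≤ A := tsum_nonneg fun j => by positivity
  have hB0 : 0 ≤ B := tsum_nonneg fun j => by positivity
  -- ⟪f, g⟫ = B
  have hinner : ⟪f, g⟫_ℂ = (B : ℂ) := by
    have h1 : ⟪f, g⟫_ℂ = ∑' j : ↥J₀ᶜ, c j.1 * ⟪f, e j.1⟫_ℂ := by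
      simpa using (innerSL ℂ f).map_tsum hsum
    rw [h1, hB, Complex.ofReal_tsum]
    refine tsum_congr fun j => ?_
    rw [← inner_conj_symm f (e j.1),
      show ⟪e (j : J), f⟫_ℂ = c j.1 from rfl, RCLike.mul_conj]
    norm_cast
  have hCS : B ≤ ‖f‖ * ‖g‖ := by
    have := norm_inner_le_norm (𝕜 := ℂ) f g
    rw [hinner] at this
    simpa [abs_of_nonneg hB0] using this
  have hgn : 0 ≤ ‖g‖ := norm_nonneg g
  have hfn : 0 ≤ ‖f‖ := norm_nonneg f
  have hB2 : B ^ 2 ≤ ‖f‖ ^ 2 * ‖g‖ ^ 2 := by nlinarith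
  nlinarith [sq_nonneg (B - ‖f‖ ^ 2 / 2), sq_nonneg ‖g‖, sq_nonneg ‖f‖,
    sq_nonneg (‖g‖ - ‖f‖ / 2)]
end

section
/- Let (e_j)_{j∈J} (J countable) be a Parseval frame in a separable complex Hilbert space H. Then there exist a complex Hilbert space M and a family of vectors (m_j)_{j∈J} in M such that the family (e_j ⊕ m_j)_{j∈J} is an orthonormal basis of the Hilbert space H ⊕ M (with inner product ⟨(a,b),(c,d)⟩ = ⟨a,c⟩ + ⟨b,d⟩); consequently (m_j)_{j∈J} is a Parseval frame in M. -/
open scoped InnerProductSpace ENNReal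
open ComplexConjugate
set_option linter.unusedSectionVars false
set_option maxHeartbeats 1000000

noncomputable section NaimarkAux
variable {H : Type*} [NormedAddCommGroup H] [InnerProductSpace ℂ H] [CompleteSpace H]
  {J : Type} [Countable J]

private lemma naimark_exp : ((2 : ℝ≥0∞).toReal) = ((2:ℕ) : ℝ) := by norm_num

omit [CompleteSpace H] [Countable J] in
private lemma naimark_memℓp (e : J → H)
    (hPF : ∀ f : H, HasSum (fun j => ‖⟪e j, f⟫_ℂ‖ ^ 2) (‖f‖ ^ 2)) (f : H) :
    Memℓp (fun j => (⟪e j, f⟫_ℂ)) (2 : ℝ≥0∞) := by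
  apply memℓp_gen
  have := (hPF f).summable
  simpa [naimark_exp, Real.rpow_natCast] using this

private def naimarkT (e : J → H)
    (hPF : ∀ f : H, HasSum (fun j => ‖⟪e j, f⟫_ℂ‖ ^ 2) (‖f‖ ^ 2)) :
    H →ₗᵢ[ℂ] lp (fun _ : J => ℂ) 2 where
  toFun f := ⟨fun j => ⟪e j, f⟫_ℂ, naimark_memℓp e hPF f⟩
  map_add' f g := by ext j; simp [inner_add_right]; rfl
  map_smul' c f := by ext j; simp [inner_smul_right]
  norm_map' f := by
    have h0 : (0:ℝ) < (2 : ℝ≥0∞).toReal := by norm_num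
    have h1 := lp.norm_rpow_eq_tsum h0
      (⟨fun j => ⟪e j, f⟫_ℂ, naimark_memℓp e hPF f⟩ : lp (fun _ : J => ℂ) 2)
    simp only [naimark_exp, Real.rpow_natCast] at h1
    have h2 : (∑' j, ‖(⟨fun j => ⟪e j, f⟫_ℂ, naimark_memℓp e hPF f⟩ :
        lp (fun _ : J => ℂ) 2) j‖ ^ (2:ℕ)) = ‖f‖ ^ 2 := by
      rw [← (hPF f).tsum_eq]
    rw [h2] at h1
    exact (sq_eq_sq₀ (norm_nonneg _) (norm_nonneg _)).mp (by simpa using h1)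

@[simp] private lemma naimarkT_apply (e : J → H)
    (hPF : ∀ f : H, HasSum (fun j => ‖⟪e j, f⟫_ℂ‖ ^ 2) (‖f‖ ^ 2)) (f : H) (j : J) :
    (naimarkT e hPF f : ∀ _ : J, ℂ) j = ⟪e j, f⟫_ℂ := rfl
end NaimarkAux

/-- **Naimark dilation.** Every Parseval frame `(e j)` in a separable complex
Hilbert space `H` admits a complementary Hilbert space `M` and vectors `(m j)` in `M` such that
`(e j ⊕ m j)` is an orthonormal basis of `H ⊕ M` (the `ℓ²`-product); consequently `(m j)` is
a Parseval frame in `M`. -/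
theorem stmt_15 {H : Type*} [NormedAddCommGroup H] [InnerProductSpace ℂ H] [CompleteSpace H]
    [TopologicalSpace.SeparableSpace H]
    {J : Type} [Countable J] (e : J → H)
    (hPF : ∀ f : H, HasSum (fun j => ‖⟪e j, f⟫_ℂ‖ ^ 2) (‖f‖ ^ 2)) :
    ∃ (M : Type) (nM : NormedAddCommGroup M) (iM : InnerProductSpace ℂ M)
      (cM : CompleteSpace M) (m : J → M),
      Orthonormal ℂ (fun j => (WithLp.equiv 2 (H × M)).symm (e j, m j)) ∧
      (Submodule.span ℂ
          (Set.range fun j => (WithLp.equiv 2 (H × M)).symm (e j, m j))).topologicalClosure =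
        ⊤ ∧
      ∀ g : M, HasSum (fun j => ‖⟪m j, g⟫_ℂ‖ ^ 2) (‖g‖ ^ 2) := by
  classical
  set T := naimarkT e hPF with hTdef
  set K : Submodule ℂ (lp (fun _ : J => ℂ) 2) := LinearMap.range T.toLinearMap with hK
  have hTinner : ∀ f g : H, ⟪T f, T g⟫_ℂ = ⟪f, g⟫_ℂ := fun f g => T.inner_map_map f g
  set δ : J → lp (fun _ : J => ℂ) 2 := fun j => lp.single 2 j (1:ℂ) with hδ
  have hδT : ∀ (j : J) (f : H), ⟪T f, δ j⟫_ℂ = ⟪f, e j⟫_ℂ := by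
    intro j f
    rw [hδ, lp.inner_single_right, RCLike.inner_apply, one_mul]
    exact inner_conj_symm f (e j)
  have hmemT : ∀ f : H, T f ∈ K := fun f => ⟨f, rfl⟩
  have hmem : ∀ j, δ j - T (e j) ∈ Kᗮ := by
    intro j
    rw [Submodule.mem_orthogonal]
    rintro x ⟨f, rfl⟩
    show ⟪T f, δ j - T (e j)⟫_ℂ = 0
    rw [inner_sub_right, hδT, hTinner, sub_self]
  have cM : CompleteSpace ↥(Kᗮ) := K.isClosed_orthogonal.completeSpace_coe
  set m : J → ↥(Kᗮ) := fun j => ⟨δ j - T (e j), hmem j⟩ with hm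
  set v : J → WithLp 2 (H × ↥(Kᗮ)) :=
    fun j => (WithLp.equiv 2 (H × ↥(Kᗮ))).symm (e j, m j) with hv
  -- inner products of the v's
  have hvinner : ∀ (j k : J), ⟪v j, v k⟫_ℂ = ⟪δ j, δ k⟫_ℂ := by
    intro j k
    rw [hv, WithLp.prod_inner_apply]
    simp only [WithLp.equiv_symm_apply, WithLp.ofLp_toLp]
    have h1 : ⟪T (e j), δ k - T (e k)⟫_ℂ = 0 :=
      Submodule.inner_right_of_mem_orthogonal (hmemT (e j)) (hmem k)
    have h2 : ⟪δ j - T (e j), T (e k)⟫_ℂ = 0 := by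
      rw [← inner_conj_symm,
        Submodule.inner_right_of_mem_orthogonal (hmemT (e k)) (hmem j), map_zero]
    have hcoe : ⟪m j, m k⟫_ℂ = ⟪δ j - T (e j), δ k - T (e k)⟫_ℂ := rfl
    have expand : ⟪δ j, δ k⟫_ℂ
        = ⟪T (e j) + (δ j - T (e j)), T (e k) + (δ k - T (e k))⟫_ℂ := by
      congr 1 <;> abel
    rw [hcoe, expand, inner_add_left, inner_add_right, inner_add_right, h1, h2, hTinner]
    ring
  have hδδ : ∀ j k : J, ⟪δ j, δ k⟫_ℂ = if j = k then 1 else 0 := by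
    intro j k
    rw [hδ, lp.inner_single_left]
    simp only [RCLike.inner_apply, map_one, one_mul, lp.single_apply]
    by_cases h : j = k <;> simp [h, eq_comm]
  have horth : Orthonormal ℂ v := by
    rw [orthonormal_iff_ite]
    intro j k
    rw [hvinner, hδδ]
  -- density
  have hg_inner : ∀ (j : J) (g : ↥(Kᗮ)), ⟪m j, g⟫_ℂ = (g : ∀ _ : J, ℂ) j := by
    intro j g
    have : ⟪m j, g⟫_ℂ = ⟪δ j - T (e j), (g : lp (fun _ : J => ℂ) 2)⟫_ℂ := rfl
    rw [this, inner_sub_left,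
      Submodule.inner_right_of_mem_orthogonal (hmemT (e j)) g.2, sub_zero, hδ,
      lp.inner_single_left]
    simp [RCLike.inner_apply]
  have hdense : (Submodule.span ℂ (Set.range v)).topologicalClosure = ⊤ := by
    rw [Submodule.topologicalClosure_eq_top_iff, Submodule.eq_bot_iff]
    intro x hx
    have hx' : ∀ j, ⟪v j, x⟫_ℂ = 0 := fun j =>
      (Submodule.mem_orthogonal _ x).mp hx (v j)
        (Submodule.subset_span (Set.mem_range_self j))
    set f : H := x.fst with hf
    set g : ↥(Kᗮ) := x.snd with hg
    have hx2 : ∀ j, ⟪e j, f⟫_ℂ + ⟪m j, g⟫_ℂ = 0 := by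
      intro j
      have := hx' j
      rw [hv, WithLp.prod_inner_apply] at this
      simp only [WithLp.equiv_symm_apply, WithLp.ofLp_toLp] at this
      exact this
    have hy : T f + (g : lp (fun _ : J => ℂ) 2) = 0 := by
      ext j
      rw [lp.coeFn_add, lp.coeFn_zero, Pi.add_apply, Pi.zero_apply, ← hg_inner j g]
      exact hx2 j
    have hTf0 : T f = 0 := by
      have h1 : ⟪T f, T f + (g : lp (fun _ : J => ℂ) 2)⟫_ℂ = 0 := by rw [hy, inner_zero_right]
      rw [inner_add_right, Submodule.inner_right_of_mem_orthogonal (hmemT f) g.2,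
        add_zero, inner_self_eq_zero] at h1
      exact h1
    have hf0 : f = 0 := by
      have := T.norm_map f
      rw [hTf0, norm_zero] at this
      exact norm_eq_zero.mp this.symm
    have hg0 : g = 0 := by
      have : (g : lp (fun _ : J => ℂ) 2) = 0 := by
        have := hy; rwa [hTf0, zero_add] at this
      exact Subtype.ext this
    show x = 0
    have : x = (WithLp.equiv 2 (H × ↥(Kᗮ))).symm (f, g) := rfl
    rw [this, hf0, hg0]
    rfl
  -- Parseval for m
  refine ⟨↥(Kᗮ), inferInstance, inferInstance, cM, m, horth, hdense, ?_⟩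
  intro g
  set b := HilbertBasis.mk horth hdense.ge with hb
  have hbj : ∀ j, b j = v j := fun j => congrFun (HilbertBasis.coe_mk horth hdense.ge) j
  set z : WithLp 2 (H × ↥(Kᗮ)) := (WithLp.equiv 2 (H × ↥(Kᗮ))).symm (0, g) with hz
  have hzinner : ∀ j, ⟪v j, z⟫_ℂ = ⟪m j, g⟫_ℂ := by
    intro j
    rw [hv, hz, WithLp.prod_inner_apply]
    simp only [WithLp.equiv_symm_apply, WithLp.ofLp_toLp, inner_zero_right, zero_add]
  have hsum := (b.hasSum_inner_mul_inner z z).mapL Complex.reCLM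
  have hterm : ∀ j, Complex.reCLM (⟪z, b j⟫_ℂ * ⟪b j, z⟫_ℂ) = ‖⟪m j, g⟫_ℂ‖ ^ 2 := by
    intro j
    rw [hbj, ← inner_conj_symm z (v j), hzinner, RCLike.conj_mul]
    simp [← Complex.ofReal_pow]
  have htot : Complex.reCLM ⟪z, z⟫_ℂ = ‖g‖ ^ 2 := by
    rw [hz, WithLp.prod_inner_apply]
    simp only [WithLp.equiv_symm_apply, WithLp.ofLp_toLp, inner_zero_left, zero_add, map_add]
    simpa using inner_self_eq_norm_sq (𝕜 := ℂ) g
  rw [htot] at hsum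
  exact HasSum.congr_fun hsum fun j => (hterm j).symm
end

section
/- For every sequence of real numbers (E_n)_{n∈ℕ} with sup_n |E_n| = ∞, there exists a Parseval frame (e_n)_{n∈ℕ} in the complex Hilbert space ℓ²(ℕ) such that the only vector f ∈ ℓ²(ℕ) for which the family (E_n ⟨f, e_n⟩ e_n)_{n∈ℕ} is unconditionally summable is f = 0; that is, the operator H_{E,e} f = ∑_n E_n ⟨f, e_n⟩ e_n with domain { f : (E_n ⟨f, e_n⟩ e_n)_n is unconditionally summable } has trivial domain {0}. -/
open scoped InnerProductSpace

open Filter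
open scoped ENNReal

set_option maxHeartbeats 1000000

/-- For every sequence of reals `(E n)` with `sup_n |E n| = ∞` there exists a
Parseval frame `(e n)` in `ℓ²(ℕ)` such that the only `f` for which the family
`(E n ⟨f, e n⟩ e n)` is unconditionally summable is `f = 0`; i.e. the operator `H_{E,e}` has
trivial domain. -/
theorem stmt_17 (E : ℕ → ℝ) (hE : ¬ BddAbove (Set.range fun n => |E n|)) :
    ∃ e : ℕ → lp (fun _ : ℕ => ℂ) 2,
      (∀ f : lp (fun _ : ℕ => ℂ) 2, HasSum (fun n => ‖⟪e n, f⟫_ℂ‖ ^ 2) (‖f‖ ^ 2)) ∧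
      (∀ f : lp (fun _ : ℕ => ℂ) 2,
        (Summable fun n => ((E n : ℂ) * ⟪e n, f⟫_ℂ) • e n) → f = 0) := by
  classical
  -- Step 1: beyond any index there are arbitrarily large values of `|E|`.
  have key : ∀ (b : ℝ) (m : ℕ), ∃ n, m < n ∧ b ≤ |E n| := by
    intro b m
    by_contra h
    push_neg at h
    apply hE
    refine ⟨max b (((Finset.range (m + 1)).image fun n => |E n|).max'
      ((Finset.nonempty_range_iff.2 (Nat.succ_ne_zero m)).image _)), ?_⟩
    rintro x ⟨n, rfl⟩
    rcases le_or_gt n m with hn | hn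
    · refine le_max_of_le_right ?_
      have hmem : |E n| ∈ (Finset.range (m + 1)).image fun n => |E n| :=
        Finset.mem_image_of_mem _ (Finset.mem_range.2 (Nat.lt_succ_of_le hn))
      exact Finset.le_max' _ _ hmem
    · exact le_max_of_le_left (h n hn).le
  -- Step 2: choose a strictly increasing sequence of indices with very large `|E|`.
  obtain ⟨g, hg_mono, hg_bound⟩ : ∃ g : ℕ → ℕ, StrictMono g ∧
      ∀ i : ℕ, ((i : ℝ) * 2 ^ (i + 1)) ≤ |E (g i)| := by
    have h' : ∀ (i m : ℕ), ∃ n, m < n ∧ ((i : ℝ) * 2 ^ (i + 1)) ≤ |E n| :=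
      fun i m => key _ m
    choose F hF1 hF2 using h'
    refine ⟨fun i => Nat.rec (F 0 0) (fun i prev => F (i + 1) prev) i, ?_, ?_⟩
    · exact strictMono_nat_of_lt_succ fun i => hF1 (i + 1) _
    · intro i
      cases i with
      | zero => exact hF2 0 0
      | succ i => exact hF2 (i + 1) _
  have hg_inj : Function.Injective g := hg_mono.injective
  -- the weights
  obtain ⟨c, hc_nonneg, hc_sq⟩ : ∃ c : ℕ → ℝ, (∀ j, 0 ≤ c j) ∧
      (∀ j, c j ^ 2 = (1 / 2 : ℝ) ^ (j + 1)) :=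
    ⟨fun j => Real.sqrt ((1 / 2 : ℝ) ^ (j + 1)), fun j => Real.sqrt_nonneg _,
      fun j => Real.sq_sqrt (by positivity)⟩
  -- the frame
  obtain ⟨e, he_g, he_zero⟩ : ∃ e : ℕ → lp (fun _ : ℕ => ℂ) 2,
      (∀ i, e (g i)
        = ((c (Nat.unpair i).2 : ℂ)) • lp.single 2 (Nat.unpair i).1 (1 : ℂ)) ∧
      (∀ n, (¬ ∃ i, g i = n) → e n = 0) := by
    refine ⟨fun n =>
      if h : ∃ i, g i = n then
        ((c (Nat.unpair h.choose).2 : ℂ)) • lp.single 2 (Nat.unpair h.choose).1 (1 : ℂ)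
      else 0, fun i => ?_, fun n h => dif_neg h⟩
    have h : ∃ i', g i' = g i := ⟨i, rfl⟩
    have hch : h.choose = i := hg_inj h.choose_spec
    beta_reduce
    rw [dif_pos h, hch]
  have htwo : (0 : ℝ) < (2 : ℝ≥0∞).toReal := by norm_num
  have hns' : ∀ k : ℕ, ‖(lp.single 2 k (1 : ℂ) : lp (fun _ : ℕ => ℂ) 2)‖ = 1 := by
    intro k
    simpa using lp.norm_single (p := 2) (E := fun _ : ℕ => ℂ) htwo (fun _ => (1 : ℂ)) k
  have h_inner : ∀ (i : ℕ) (f : lp (fun _ : ℕ => ℂ) 2),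
      ⟪e (g i), f⟫_ℂ = (c (Nat.unpair i).2 : ℂ) * f (Nat.unpair i).1 := by
    intro i f
    rw [he_g, inner_smul_left, lp.inner_single_left]
    simp [RCLike.inner_apply]
  refine ⟨e, ?_, ?_⟩
  · -- Parseval
    intro f
    have hf : HasSum (fun k => ‖f k‖ ^ 2) (‖f‖ ^ 2) := by
      have h1 := lp.hasSum_norm (E := fun _ : ℕ => ℂ) htwo f
      have h2 : (2 : ℝ≥0∞).toReal = ((2 : ℕ) : ℝ) := by norm_num
      rw [h2] at h1
      simpa [Real.rpow_natCast] using h1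
    have hgeo : HasSum (fun j : ℕ => (1 / 2 : ℝ) ^ (j + 1)) 1 := by
      have h0 := (hasSum_geometric_of_lt_one (by norm_num : (0:ℝ) ≤ 1/2)
        (by norm_num : (1/2 : ℝ) < 1)).mul_left (1/2 : ℝ)
      have : (1/2 : ℝ) * (1 - 1/2)⁻¹ = 1 := by norm_num
      rw [this] at h0
      refine h0.congr_fun fun j => ?_
      rw [pow_succ, mul_comm]
    have hprod : HasSum (fun p : ℕ × ℕ => ‖f p.1‖ ^ 2 * (1 / 2 : ℝ) ^ (p.2 + 1))
        (‖f‖ ^ 2) := by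
      have hsum := hf.mul hgeo
        (Summable.mul_of_nonneg hf.summable hgeo.summable
          (fun k => by positivity) (fun j => by positivity))
      simpa using hsum
    have hNat : HasSum
        (fun i : ℕ => ‖f (Nat.unpair i).1‖ ^ 2 * (1 / 2 : ℝ) ^ ((Nat.unpair i).2 + 1))
        (‖f‖ ^ 2) := by
      refine (Equiv.hasSum_iff Nat.pairEquiv).1 ?_
      refine hprod.congr_fun fun p => ?_
      simp [Nat.pairEquiv_apply, Function.uncurry]
    refine (Function.Injective.hasSum_iff hg_inj ?_).1 ?_
    · intro n hn
      have hne : ¬ ∃ i, g i = n := by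
        rintro ⟨i, rfl⟩
        exact hn ⟨i, rfl⟩
      simp [he_zero n hne]
    · refine hNat.congr_fun fun i => ?_
      have := h_inner i f
      simp only [Function.comp_apply, this]
      rw [norm_mul, mul_pow]
      simp only [Complex.norm_real]
      rw [Real.norm_eq_abs, abs_of_nonneg (hc_nonneg _), hc_sq]
      ring
  · -- trivial domain
    intro f hsum
    have hterm : Tendsto (fun n => ((E n : ℂ) * ⟪e n, f⟫_ℂ) • e n) atTop (nhds 0) :=
      hsum.tendsto_atTop_zero
    have hnorm : Tendsto (fun n => ‖((E n : ℂ) * ⟪e n, f⟫_ℂ) • e n‖) atTop (nhds 0) := by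
      simpa using hterm.norm
    have hk : ∀ k, f k = 0 := by
      intro k
      by_contra hfk
      have hfk' : 0 < ‖f k‖ := by simpa [norm_pos_iff] using hfk
      -- the subsequence along `g (Nat.pair k j)`
      have hcomp : Tendsto (fun j : ℕ => g (Nat.pair k j)) atTop atTop := by
        refine tendsto_atTop_mono (fun j => ?_) tendsto_id
        calc (j : ℕ) ≤ Nat.pair k j := Nat.right_le_pair k j
        _ ≤ g (Nat.pair k j) := hg_mono.le_apply
      have hsub : Tendsto
          (fun j : ℕ => ‖((E (g (Nat.pair k j)) : ℂ) *
            ⟪e (g (Nat.pair k j)), f⟫_ℂ) • e (g (Nat.pair k j))‖) atTop (nhds 0) :=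
        hnorm.comp hcomp
      -- lower bound
      have hlow : ∀ j : ℕ, (j : ℝ) * ‖f k‖ ≤
          ‖((E (g (Nat.pair k j)) : ℂ) *
            ⟪e (g (Nat.pair k j)), f⟫_ℂ) • e (g (Nat.pair k j))‖ := by
        intro j
        set i := Nat.pair k j with hi
        have hji : j ≤ i := Nat.right_le_pair k j
        have hunp : Nat.unpair i = (k, j) := Nat.unpair_pair k j
        have hval : ‖((E (g i) : ℂ) * ⟪e (g i), f⟫_ℂ) • e (g i)‖
            = |E (g i)| * ((1 / 2 : ℝ) ^ (j + 1) * ‖f k‖) := by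
          rw [h_inner i f, he_g i, hunp]
          simp only [Prod.fst, Prod.snd]
          rw [norm_smul, norm_smul, norm_mul, hns', mul_one]
          simp only [Complex.norm_real, Real.norm_eq_abs, abs_of_nonneg (hc_nonneg j)]
          rw [norm_mul, Complex.norm_real, Real.norm_eq_abs,
            abs_of_nonneg (hc_nonneg j), ← hc_sq j]
          ring
        rw [hval]
        have hEb : ((j : ℝ)) * 2 ^ (j + 1) ≤ |E (g i)| := by
          refine le_trans ?_ (hg_bound i)
          have hj : (j : ℝ) ≤ (i : ℝ) := Nat.cast_le.2 hji
          have hp : (2 : ℝ) ^ (j + 1) ≤ 2 ^ (i + 1) :=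
            pow_le_pow_right₀ (by norm_num) (Nat.succ_le_succ hji)
          exact mul_le_mul hj hp (by positivity) (Nat.cast_nonneg i)
        have hji2 : (j : ℝ) ≤ |E (g i)| * (1 / 2 : ℝ) ^ (j + 1) := by
          calc (j : ℝ) = ((j : ℝ) * 2 ^ (j + 1)) * (1 / 2 : ℝ) ^ (j + 1) := by
                rw [mul_assoc, ← mul_pow]; norm_num
            _ ≤ |E (g i)| * (1 / 2 : ℝ) ^ (j + 1) :=
                mul_le_mul_of_nonneg_right hEb (by positivity)
        calc (j : ℝ) * ‖f k‖ ≤ (|E (g i)| * (1 / 2 : ℝ) ^ (j + 1)) * ‖f k‖ :=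
              mul_le_mul_of_nonneg_right hji2 (norm_nonneg _)
          _ = |E (g i)| * ((1 / 2 : ℝ) ^ (j + 1) * ‖f k‖) := by ring
      have hdiv : Tendsto (fun j : ℕ => (j : ℝ) * ‖f k‖) atTop atTop :=
        (tendsto_natCast_atTop_atTop).atTop_mul_const hfk'
      exact not_tendsto_nhds_of_tendsto_atTop (tendsto_atTop_mono hlow hdiv) 0 hsub
    apply lp.ext
    funext k
    simpa using hk k
end
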